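/- arXiv:math/0110292 — 5 statements merged into one kernel-verified Lean document; each statement's English description precedes it below -/
import Mathlib

section
/- Let X be a compact T1 topological space and let B be a lattice base for the closed sets of X (a family of closed sets containing ∅ and X, closed under finite unions and finite intersections, such that every closed subset of X is an intersection of members of B). Then X is Hausdorff if and only if B is a normal lattice, i.e., for all a, b ∈ B with a ∩ b = ∅ there exist x, y ∈ B with a ∩ x = ∅, b ∩ y = ∅ and x ∪ y = X. -/
/-- A lattice base for the closed sets of `X`: a family of closed sets containing
`∅` and `X`, closed under finite unions and intersections, such that every closed
set is an intersection of members of the family. -/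
def IsLatticeBaseForCloseds {X : Type*} [TopologicalSpace X] (B : Set (Set X)) : Prop :=
  (∀ b ∈ B, IsClosed b) ∧ ∅ ∈ B ∧ Set.univ ∈ B ∧
  (∀ a ∈ B, ∀ b ∈ B, a ∪ b ∈ B) ∧ (∀ a ∈ B, ∀ b ∈ B, a ∩ b ∈ B) ∧
  ∀ F : Set X, IsClosed F → ∃ S ⊆ B, F = ⋂₀ S

private lemma biInter_mem_of_lattice {X : Type*} {B : Set (Set X)} (h_univ : Set.univ ∈ B)
    (h_inter : ∀ a ∈ B, ∀ b ∈ B, a ∩ b ∈ B) {ι : Type*} (t : Finset ι)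
    (f : ι → Set X) (hf : ∀ i ∈ t, f i ∈ B) : (⋂ i ∈ t, f i) ∈ B := by
  classical
  induction t using Finset.induction_on with
  | empty => simpa using h_univ
  | @insert j s hj ih =>
      rw [Finset.set_biInter_insert]
      exact h_inter _ (hf _ (Finset.mem_insert_self _ _)) _
        (ih fun i hi => hf i (Finset.mem_insert_of_mem hi))

private lemma sep_lemma {X : Type*} [TopologicalSpace X] {B : Set (Set X)}
    (hB : IsLatticeBaseForCloseds B) {K C : Set X} (hK : IsCompact K) (hC : IsClosed C)
    (hd : K ∩ C = ∅) : ∃ x ∈ B, C ⊆ x ∧ K ∩ x = ∅ := by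
  obtain ⟨hcl, h0, huniv, hun, hint, hbase⟩ := hB
  obtain ⟨S, hSB, hCS⟩ := hbase C hC
  have hcover : K ⊆ ⋃ s : S, (s : Set X)ᶜ := by
    intro p hp
    have hpC : p ∉ C := fun h => (Set.eq_empty_iff_forall_notMem.1 hd p) ⟨hp, h⟩
    rw [hCS, Set.mem_sInter] at hpC
    push_neg at hpC
    obtain ⟨s, hsS, hps⟩ := hpC
    exact Set.mem_iUnion.2 ⟨⟨s, hsS⟩, hps⟩
  obtain ⟨t, ht⟩ := hK.elim_finite_subcover (fun s : S => (s : Set X)ᶜ)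
    (fun s => (hcl s (hSB s.2)).isOpen_compl) hcover
  refine ⟨⋂ i ∈ t, (i : Set X), biInter_mem_of_lattice huniv hint t _
    (fun i _ => hSB i.2), ?_, ?_⟩
  · intro p hp
    refine Set.mem_iInter₂.2 fun i _ => ?_
    rw [hCS] at hp
    exact hp i i.2
  · rw [Set.eq_empty_iff_forall_notMem]
    rintro p ⟨hpK, hpx⟩
    obtain ⟨i, hit, hpi⟩ := Set.mem_iUnion₂.1 (ht hpK)
    exact hpi (Set.mem_iInter₂.1 hpx i hit)

/-- A compact T1 space with a lattice base `B` for its closed sets is Hausdorff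
iff the lattice `B` is normal. -/
theorem t2_iff_normal_lattice_base (X : Type*) [TopologicalSpace X] [CompactSpace X]
    [T1Space X] (B : Set (Set X)) (hB : IsLatticeBaseForCloseds B) :
    T2Space X ↔
      ∀ a ∈ B, ∀ b ∈ B, a ∩ b = ∅ →
        ∃ x ∈ B, ∃ y ∈ B, a ∩ x = ∅ ∧ b ∩ y = ∅ ∧ x ∪ y = Set.univ := by
  obtain ⟨hcl, h0, huniv, hun, hint, hbase⟩ := hB
  have hB' : IsLatticeBaseForCloseds B := ⟨hcl, h0, huniv, hun, hint, hbase⟩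
  constructor
  · intro h2 a ha b hb hab
    have hna : IsClosed a := hcl a ha
    have hnb : IsClosed b := hcl b hb
    obtain ⟨U, V, hU, hV, haU, hbV, hUV⟩ :=
      NormalSpace.normal a b hna hnb (Set.disjoint_iff_inter_eq_empty.2 hab)
    obtain ⟨x, hxB, hUx, hax⟩ := sep_lemma hB' hna.isCompact hU.isClosed_compl
      (by rw [Set.eq_empty_iff_forall_notMem]; rintro p ⟨hpa, hpU⟩; exact hpU (haU hpa))
    obtain ⟨y, hyB, hVy, hby⟩ := sep_lemma hB' hnb.isCompact hV.isClosed_compl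
      (by rw [Set.eq_empty_iff_forall_notMem]; rintro p ⟨hpb, hpV⟩; exact hpV (hbV hpb))
    refine ⟨x, hxB, y, hyB, hax, hby, ?_⟩
    rw [Set.eq_univ_iff_forall]
    intro p
    by_contra hp
    rw [Set.mem_union] at hp
    push_neg at hp
    have hpU : p ∈ U := by by_contra h; exact hp.1 (hUx h)
    have hpV : p ∈ V := by by_contra h; exact hp.2 (hVy h)
    exact Set.disjoint_left.1 hUV hpU hpV
  · intro hnorm
    refine { t2 := fun p q hpq => ?_ }
    obtain ⟨Sp, hSpB, hSp⟩ := hbase {p} isClosed_singleton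
    obtain ⟨Sq, hSqB, hSq⟩ := hbase {q} isClosed_singleton
    set ι := {a : Set X // a ∈ B ∧ p ∈ a} × {b : Set X // b ∈ B ∧ q ∈ b} with hι
    have hempty : (Set.univ : Set X) ∩ ⋂ i : ι, (i.1.1 ∩ i.2.1) = ∅ := by
      rw [Set.eq_empty_iff_forall_notMem]
      rintro z ⟨-, hz⟩
      rw [Set.mem_iInter] at hz
      have hzp : z = p := by
        have : z ∈ ({p} : Set X) := by
          rw [hSp]
          intro s hs
          have hps : p ∈ s := by
            have := hSp ▸ (Set.mem_singleton p); exact this s hs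
          exact (hz ⟨⟨s, hSpB hs, hps⟩, ⟨Set.univ, huniv, Set.mem_univ q⟩⟩).1
        exact this
      have hzq : z = q := by
        have : z ∈ ({q} : Set X) := by
          rw [hSq]
          intro s hs
          have hqs : q ∈ s := by
            have := hSq ▸ (Set.mem_singleton q); exact this s hs
          exact (hz ⟨⟨Set.univ, huniv, Set.mem_univ p⟩, ⟨s, hSqB hs, hqs⟩⟩).2
        exact this
      exact hpq (hzp ▸ hzq)
    obtain ⟨t, ht⟩ := isCompact_univ.elim_finite_subfamily_closed
      (fun i : ι => i.1.1 ∩ i.2.1)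
      (fun i => (hcl _ i.1.2.1).inter (hcl _ i.2.2.1)) hempty
    set a₀ : Set X := ⋂ i ∈ t, i.1.1 with ha₀
    set b₀ : Set X := ⋂ i ∈ t, i.2.1 with hb₀
    have ha₀B : a₀ ∈ B := biInter_mem_of_lattice huniv hint t _ (fun i _ => i.1.2.1)
    have hb₀B : b₀ ∈ B := biInter_mem_of_lattice huniv hint t _ (fun i _ => i.2.2.1)
    have hpa₀ : p ∈ a₀ := Set.mem_iInter₂.2 fun i _ => i.1.2.2
    have hqb₀ : q ∈ b₀ := Set.mem_iInter₂.2 fun i _ => i.2.2.2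
    have hd : a₀ ∩ b₀ = ∅ := by
      rw [Set.eq_empty_iff_forall_notMem]
      rintro z ⟨hza, hzb⟩
      apply Set.eq_empty_iff_forall_notMem.1 ht z
      refine ⟨Set.mem_univ z, Set.mem_iInter₂.2 fun i hi => ?_⟩
      exact ⟨Set.mem_iInter₂.1 hza i hi, Set.mem_iInter₂.1 hzb i hi⟩
    obtain ⟨x, hxB, y, hyB, hax, hby, hxy⟩ := hnorm a₀ ha₀B b₀ hb₀B hd
    refine ⟨xᶜ, yᶜ, (hcl x hxB).isOpen_compl, (hcl y hyB).isOpen_compl, ?_, ?_, ?_⟩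
    · intro h; exact Set.eq_empty_iff_forall_notMem.1 hax p ⟨hpa₀, h⟩
    · intro h; exact Set.eq_empty_iff_forall_notMem.1 hby q ⟨hqb₀, h⟩
    · rw [Set.disjoint_left]
      intro z hzx hzy
      rcases (Set.eq_univ_iff_forall.1 hxy z).elim (fun h => hzx h) (fun h => hzy h)
end

section
/- Let Z be a metric continuum, f : Z → [0,1] continuous, P = ({1/4} × [0, 2/3]) ∪ ([1/4, 1/2] × {2/3}) ∪ ({1/2} × [1/3, 2/3]) ∪ ([1/2, 3/4] × {1/3}) ∪ ({3/4} × [1/3, 1]) ⊆ [0,1] × [0,1], X⁺ = {(t, x) ∈ [0,1] × Z : (t, f(x)) ∈ P} and π : X⁺ → Z the projection π(t, x) = x. If F and G are disjoint closed subsets of X⁺ with F ∪ G = X⁺, then either π(F) = Z and π(G) ⊆ f⁻¹([1/3, 2/3]), or π(G) = Z and π(F) ⊆ f⁻¹([1/3, 2/3]). -/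
open Set

/-- The polygonal arc `P` in the unit square. -/
def Pset : Set (ℝ × ℝ) :=
  ({(1:ℝ)/4} ×ˢ Icc (0:ℝ) (2/3)) ∪ (Icc ((1:ℝ)/4) (1/2) ×ˢ {(2:ℝ)/3}) ∪
  ({(1:ℝ)/2} ×ˢ Icc ((1:ℝ)/3) (2/3)) ∪ (Icc ((1:ℝ)/2) (3/4) ×ˢ {(1:ℝ)/3}) ∪
  ({(3:ℝ)/4} ×ˢ Icc ((1:ℝ)/3) 1)

/-- `X⁺ = {(t, x) ∈ [0,1] × Z : (t, f(x)) ∈ P}`. -/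
def Xplus {Z : Type*} (f : Z → ℝ) : Set (ℝ × Z) :=
  {p | p.1 ∈ Icc (0:ℝ) 1 ∧ (p.1, f p.2) ∈ Pset}

lemma Pset_left {y : ℝ} (h0 : 0 ≤ y) (h1 : y ≤ 2/3) : ((1/4 : ℝ), y) ∈ Pset := by
  simp only [Pset, mem_union, mem_prod, mem_singleton_iff, mem_Icc]; tauto

lemma Pset_mid {y : ℝ} (h0 : 1/3 ≤ y) (h1 : y ≤ 2/3) : ((1/2 : ℝ), y) ∈ Pset := by
  simp only [Pset, mem_union, mem_prod, mem_singleton_iff, mem_Icc]; tauto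

lemma Pset_right {y : ℝ} (h0 : 1/3 ≤ y) (h1 : y ≤ 1) : ((3/4 : ℝ), y) ∈ Pset := by
  simp only [Pset, mem_union, mem_prod, mem_singleton_iff, mem_Icc]; tauto

lemma Pset_seg23 {t : ℝ} (h0 : 1/4 ≤ t) (h1 : t ≤ 1/2) : (t, (2:ℝ)/3) ∈ Pset := by
  simp only [Pset, mem_union, mem_prod, mem_singleton_iff, mem_Icc]; tauto

lemma Pset_seg13 {t : ℝ} (h0 : 1/2 ≤ t) (h1 : t ≤ 3/4) : (t, (1:ℝ)/3) ∈ Pset := by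
  simp only [Pset, mem_union, mem_prod, mem_singleton_iff, mem_Icc]; tauto

lemma Pset_low {t y : ℝ} (h : (t, y) ∈ Pset) (hy : y < 1/3) : t = 1/4 := by
  simp only [Pset, mem_union, mem_prod, mem_singleton_iff, mem_Icc] at h
  rcases h with (((⟨h1,h2⟩|⟨h1,h2⟩)|⟨h1,h2⟩)|⟨h1,h2⟩)|⟨h1,h2⟩ <;> first | exact h1 | linarith

lemma Pset_high {t y : ℝ} (h : (t, y) ∈ Pset) (hy : 2/3 < y) : t = 3/4 := by
  simp only [Pset, mem_union, mem_prod, mem_singleton_iff, mem_Icc] at h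
  rcases h with (((⟨h1,h2⟩|⟨h1,h2⟩)|⟨h1,h2⟩)|⟨h1,h2⟩)|⟨h1,h2⟩ <;> first | exact h1 | linarith

/-- If `X⁺` is partitioned into two disjoint relatively closed sets `F` and `G`,
then one of them projects onto all of `Z` while the other projects into
`f⁻¹([1/3, 2/3])`. -/
theorem clopen_partition_projection (Z : Type*) [MetricSpace Z] [CompactSpace Z]
    [ConnectedSpace Z] (f : Z → ℝ) (hf : Continuous f)
    (hf01 : ∀ z, f z ∈ Icc (0:ℝ) 1)
    (F G : Set (ℝ × Z)) (hFsub : F ⊆ Xplus f) (hGsub : G ⊆ Xplus f)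
    (hFcl : IsClosed (Subtype.val ⁻¹' F : Set (Xplus f)))
    (hGcl : IsClosed (Subtype.val ⁻¹' G : Set (Xplus f)))
    (hdisj : F ∩ G = ∅) (hcover : F ∪ G = Xplus f) :
    (Prod.snd '' F = univ ∧ Prod.snd '' G ⊆ f ⁻¹' Icc ((1:ℝ)/3) (2/3)) ∨
    (Prod.snd '' G = univ ∧ Prod.snd '' F ⊆ f ⁻¹' Icc ((1:ℝ)/3) (2/3)) := by
  classical
  have hFG : ∀ p, p ∈ Xplus f → p ∈ F ∨ p ∈ G := by
    intro p hp; rw [← hcover] at hp; exact hp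
  have hnot : ∀ p, p ∈ F → p ∈ G → False := by
    intro p h1 h2
    have : p ∈ F ∩ G := ⟨h1, h2⟩
    rw [hdisj] at this; exact this
  -- relatively open witnesses
  have relopen : ∀ (s : Set (ℝ × Z)), s ⊆ Xplus f →
      IsOpen (Subtype.val ⁻¹' s : Set (Xplus f)) → ∃ O, IsOpen O ∧ s = O ∩ Xplus f := by
    intro s hsub hopen
    rw [isOpen_induced_iff] at hopen
    obtain ⟨O, hO, hOe⟩ := hopen
    refine ⟨O, hO, ?_⟩
    ext p
    constructor
    · intro hp
      have hpX : p ∈ Xplus f := hsub hp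
      have : (⟨p, hpX⟩ : Xplus f) ∈ Subtype.val ⁻¹' s := hp
      rw [← hOe] at this
      exact ⟨this, hpX⟩
    · rintro ⟨hpO, hpX⟩
      have : (⟨p, hpX⟩ : Xplus f) ∈ Subtype.val ⁻¹' O := hpO
      rw [hOe] at this
      exact this
  have hGopen : IsOpen (Subtype.val ⁻¹' G : Set (Xplus f)) := by
    have he : (Subtype.val ⁻¹' G : Set (Xplus f)) = (Subtype.val ⁻¹' F)ᶜ := by
      ext p
      simp only [mem_preimage, mem_compl_iff]
      constructor
      · intro h hF; exact hnot _ hF h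
      · intro h; rcases hFG _ p.2 with h' | h'
        · exact absurd h' h
        · exact h'
    rw [he]; exact hFcl.isOpen_compl
  have hFopen : IsOpen (Subtype.val ⁻¹' F : Set (Xplus f)) := by
    have he : (Subtype.val ⁻¹' F : Set (Xplus f)) = (Subtype.val ⁻¹' G)ᶜ := by
      ext p
      simp only [mem_preimage, mem_compl_iff]
      constructor
      · intro h hG; exact hnot _ h hG
      · intro h; rcases hFG _ p.2 with h' | h'
        · exact h'
        · exact absurd h' h
    rw [he]; exact hGcl.isOpen_compl
  obtain ⟨OG, hOG, hOGe⟩ := relopen G hGsub hGopen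
  obtain ⟨OF, hOF, hOFe⟩ := relopen F hFsub hFopen
  have hGiff : ∀ p : ℝ × Z, p ∈ OG → p ∈ Xplus f → p ∈ G := by
    intro p h1 h2; rw [hOGe]; exact ⟨h1, h2⟩
  have hFiff : ∀ p : ℝ × Z, p ∈ OF → p ∈ Xplus f → p ∈ F := by
    intro p h1 h2; rw [hOFe]; exact ⟨h1, h2⟩
  have hGO : ∀ p, p ∈ G → p ∈ OG := by intro p hp; rw [hOGe] at hp; exact hp.1
  have hFO : ∀ p, p ∈ F → p ∈ OF := by intro p hp; rw [hOFe] at hp; exact hp.1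
  -- membership of branch points in `Xplus`
  have mX14 : ∀ x : Z, f x ≤ 2/3 → ((1/4 : ℝ), x) ∈ Xplus f := by
    intro x h
    exact ⟨by constructor <;> norm_num, Pset_left (hf01 x).1 h⟩
  have mX12 : ∀ x : Z, 1/3 ≤ f x → f x ≤ 2/3 → ((1/2 : ℝ), x) ∈ Xplus f := by
    intro x h1 h2
    exact ⟨by constructor <;> norm_num, Pset_mid h1 h2⟩
  have mX34 : ∀ x : Z, 1/3 ≤ f x → ((3/4 : ℝ), x) ∈ Xplus f := by
    intro x h1
    exact ⟨by constructor <;> norm_num, Pset_right h1 (hf01 x).2⟩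
  -- generic segment monochromaticity
  have seg : ∀ (x : Z) (t1 t2 : ℝ) (O1 O2 s1 s2 : Set (ℝ × Z)), IsOpen O1 → IsOpen O2 →
      s1 = O1 ∩ Xplus f → s2 = O2 ∩ Xplus f → (∀ p, p ∈ s1 → p ∈ s2 → False) →
      (∀ p, p ∈ Xplus f → p ∈ s1 ∨ p ∈ s2) → t1 ≤ t2 →
      (∀ t, t ∈ Icc t1 t2 → (t, x) ∈ Xplus f) → (t1, x) ∈ s1 → (t2, x) ∈ s2 → False := by
    intro x t1 t2 O1 O2 s1 s2 hO1 hO2 he1 he2 hdisj' hcov' h12 hsegX h1 h2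
    have hu : IsOpen {t : ℝ | (t, x) ∈ O1} :=
      hO1.preimage (continuous_id.prodMk continuous_const)
    have hv : IsOpen {t : ℝ | (t, x) ∈ O2} :=
      hO2.preimage (continuous_id.prodMk continuous_const)
    have hsub : Icc t1 t2 ⊆ {t : ℝ | (t, x) ∈ O1} ∪ {t : ℝ | (t, x) ∈ O2} := by
      intro t ht
      rcases hcov' _ (hsegX t ht) with h | h
      · exact Or.inl (by rw [he1] at h; exact h.1)
      · exact Or.inr (by rw [he2] at h; exact h.1)
    have hne1 : (Icc t1 t2 ∩ {t : ℝ | (t, x) ∈ O1}).Nonempty :=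
      ⟨t1, ⟨le_refl _, h12⟩, by rw [he1] at h1; exact h1.1⟩
    have hne2 : (Icc t1 t2 ∩ {t : ℝ | (t, x) ∈ O2}).Nonempty :=
      ⟨t2, ⟨h12, le_refl _⟩, by rw [he2] at h2; exact h2.1⟩
    obtain ⟨t, htI, ht1, ht2⟩ := isPreconnected_Icc _ _ hu hv hsub hne1 hne2
    have hX : (t, x) ∈ Xplus f := hsegX t htI
    exact hdisj' _ (by rw [he1]; exact ⟨ht1, hX⟩) (by rw [he2]; exact ⟨ht2, hX⟩)
  have hFGdisj : ∀ p, p ∈ F → p ∈ G → False := hnot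
  have hGFdisj : ∀ p, p ∈ G → p ∈ F → False := fun p h1 h2 => hnot p h2 h1
  have hcovFG : ∀ p, p ∈ Xplus f → p ∈ F ∨ p ∈ G := hFG
  have hcovGF : ∀ p, p ∈ Xplus f → p ∈ G ∨ p ∈ F := fun p hp => (hFG p hp).symm
  -- segment lemmas at the two connecting levels
  have segX23 : ∀ x : Z, f x = 2/3 → ∀ t, t ∈ Icc (1/4 : ℝ) (1/2) → (t, x) ∈ Xplus f := by
    intro x hx t ht
    refine ⟨⟨by linarith [ht.1], by linarith [ht.2]⟩, ?_⟩
    rw [hx]; exact Pset_seg23 ht.1 ht.2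
  have segX13 : ∀ x : Z, f x = 1/3 → ∀ t, t ∈ Icc (1/2 : ℝ) (3/4) → (t, x) ∈ Xplus f := by
    intro x hx t ht
    refine ⟨⟨by linarith [ht.1], by linarith [ht.2]⟩, ?_⟩
    rw [hx]; exact Pset_seg13 ht.1 ht.2
  have seg23 : ∀ x : Z, f x = 2/3 → (((1/4 : ℝ), x) ∈ G ↔ ((1/2 : ℝ), x) ∈ G) := by
    intro x hx
    have hX2 : ((1/2 : ℝ), x) ∈ Xplus f := mX12 x (by rw [hx]; norm_num) (le_of_eq hx)
    have hX1 : ((1/4 : ℝ), x) ∈ Xplus f := mX14 x (le_of_eq hx)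
    constructor
    · intro h1
      by_contra h2
      have h2F : ((1/2 : ℝ), x) ∈ F := by rcases hFG _ hX2 with h | h; exact h; exact absurd h h2
      exact seg x (1/4) (1/2) OG OF G F hOG hOF hOGe hOFe hGFdisj hcovGF (by norm_num)
        (segX23 x hx) h1 h2F
    · intro h2
      by_contra h1
      have h1F : ((1/4 : ℝ), x) ∈ F := by rcases hFG _ hX1 with h | h; exact h; exact absurd h h1
      exact seg x (1/4) (1/2) OF OG F G hOF hOG hOFe hOGe hFGdisj hcovFG (by norm_num)
        (segX23 x hx) h1F h2
  have seg13 : ∀ x : Z, f x = 1/3 → (((1/2 : ℝ), x) ∈ G ↔ ((3/4 : ℝ), x) ∈ G) := by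
    intro x hx
    have hX2 : ((1/2 : ℝ), x) ∈ Xplus f := mX12 x (ge_of_eq hx) (by rw [hx]; norm_num)
    have hX3 : ((3/4 : ℝ), x) ∈ Xplus f := mX34 x (ge_of_eq hx)
    constructor
    · intro h1
      by_contra h2
      have h2F : ((3/4 : ℝ), x) ∈ F := by rcases hFG _ hX3 with h | h; exact h; exact absurd h h2
      exact seg x (1/2) (3/4) OG OF G F hOG hOF hOGe hOFe hGFdisj hcovGF (by norm_num)
        (segX13 x hx) h1 h2F
    · intro h2
      by_contra h1
      have h1F : ((1/2 : ℝ), x) ∈ F := by rcases hFG _ hX2 with h | h; exact h; exact absurd h h1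
      exact seg x (1/2) (3/4) OF OG F G hOF hOG hOFe hOGe hFGdisj hcovFG (by norm_num)
        (segX13 x hx) h1F h2
  -- eventually-helpers
  have ev : ∀ (t : ℝ) (O : Set (ℝ × Z)), IsOpen O → ∀ x₀ : Z, (t, x₀) ∈ O →
      ∀ᶠ x in nhds x₀, (t, x) ∈ O := by
    intro t O hO x₀ h
    exact (hO.preimage (continuous_const.prodMk continuous_id)).mem_nhds h
  have evlt : ∀ (c : ℝ) (x₀ : Z), f x₀ < c → ∀ᶠ x in nhds x₀, f x < c := by
    intro c x₀ h
    exact (isOpen_lt hf continuous_const).mem_nhds h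
  have evgt : ∀ (c : ℝ) (x₀ : Z), c < f x₀ → ∀ᶠ x in nhds x₀, c < f x := by
    intro c x₀ h
    exact (isOpen_lt continuous_const hf).mem_nhds h
  -- the key impossibility
  have key : ∀ x₀ x₁ : Z, (∀ t : ℝ, (t, x₀) ∈ Xplus f → (t, x₀) ∈ G) →
      (∀ t : ℝ, (t, x₁) ∈ Xplus f → (t, x₁) ∈ F) → False := by
    intro x₀ x₁ hall0 hall1
    set S : Set Z := {x | (f x < 1/3 ∧ ((1/4 : ℝ), x) ∈ G) ∨ (2/3 < f x ∧ ((3/4 : ℝ), x) ∈ G) ∨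
      (1/3 ≤ f x ∧ f x ≤ 2/3 ∧
        ((((1/4 : ℝ), x) ∈ G ∧ ((1/2 : ℝ), x) ∈ G ∧ ((3/4 : ℝ), x) ∈ G) ∨
         (((1/2 : ℝ), x) ∈ F ∧ (((1/4 : ℝ), x) ∈ G ∨ ((3/4 : ℝ), x) ∈ G)))) } with hSdef
    have hmem : ∀ x : Z, x ∈ S ↔ ((f x < 1/3 ∧ ((1/4 : ℝ), x) ∈ G) ∨ (2/3 < f x ∧ ((3/4 : ℝ), x) ∈ G) ∨
      (1/3 ≤ f x ∧ f x ≤ 2/3 ∧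
        ((((1/4 : ℝ), x) ∈ G ∧ ((1/2 : ℝ), x) ∈ G ∧ ((3/4 : ℝ), x) ∈ G) ∨
         (((1/2 : ℝ), x) ∈ F ∧ (((1/4 : ℝ), x) ∈ G ∨ ((3/4 : ℝ), x) ∈ G))))) := by
      intro x; rw [hSdef]; rfl
    have hSopen : IsOpen S := by
      rw [isOpen_iff_mem_nhds]
      intro z hz
      rw [hmem z] at hz
      rcases hz with ⟨hlt, hA⟩ | ⟨hgt, hC⟩ | ⟨hge, hle, hpat⟩
      · filter_upwards [evlt (1/3) z hlt, ev (1/4) OG hOG z (hGO _ hA)] with x e0 e1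
        rw [hmem]
        exact Or.inl ⟨e0, hGiff _ e1 (mX14 x (by linarith))⟩
      · filter_upwards [evgt (2/3) z hgt, ev (3/4) OG hOG z (hGO _ hC)] with x e0 e1
        rw [hmem]
        exact Or.inr (Or.inl ⟨e0, hGiff _ e1 (mX34 x (by linarith))⟩)
      · rcases hpat with ⟨hA, hB, hC⟩ | ⟨hBF, hAC⟩
        · filter_upwards [ev (1/4) OG hOG z (hGO _ hA), ev (1/2) OG hOG z (hGO _ hB),
            ev (3/4) OG hOG z (hGO _ hC)] with x e1 e2 e3
          rw [hmem]
          rcases lt_or_ge (f x) (1/3) with h | h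
          · exact Or.inl ⟨h, hGiff _ e1 (mX14 x (by linarith))⟩
          · rcases le_or_gt (f x) (2/3) with h' | h'
            · exact Or.inr (Or.inr ⟨h, h', Or.inl ⟨hGiff _ e1 (mX14 x h'),
                hGiff _ e2 (mX12 x h h'), hGiff _ e3 (mX34 x h)⟩⟩)
            · exact Or.inr (Or.inl ⟨h', hGiff _ e3 (mX34 x h)⟩)
        · rcases hAC with hA | hC
          · -- pattern (G, F, ·): here f z < 2/3
            have hlt2 : f z < 2/3 := by
              rcases lt_or_eq_of_le hle with h | h
              · exact h
              · exact absurd ((seg23 z h).mp hA) (fun hg => hnot _ hBF hg)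
            filter_upwards [evlt (2/3) z hlt2, ev (1/4) OG hOG z (hGO _ hA),
              ev (1/2) OF hOF z (hFO _ hBF)] with x e0 e1 e2
            rw [hmem]
            rcases lt_or_ge (f x) (1/3) with h | h
            · exact Or.inl ⟨h, hGiff _ e1 (mX14 x (le_of_lt e0))⟩
            · exact Or.inr (Or.inr ⟨h, le_of_lt e0, Or.inr ⟨hFiff _ e2 (mX12 x h (le_of_lt e0)),
                Or.inl (hGiff _ e1 (mX14 x (le_of_lt e0)))⟩⟩)
          · -- pattern (·, F, G): here f z > 1/3
            have hgt2 : 1/3 < f z := by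
              rcases lt_or_eq_of_le hge with h | h
              · exact h
              · exact absurd ((seg13 z h.symm).mpr hC) (fun hg => hnot _ hBF hg)
            filter_upwards [evgt (1/3) z hgt2, ev (1/2) OF hOF z (hFO _ hBF),
              ev (3/4) OG hOG z (hGO _ hC)] with x e0 e2 e3
            rw [hmem]
            rcases le_or_gt (f x) (2/3) with h | h
            · exact Or.inr (Or.inr ⟨le_of_lt e0, h, Or.inr ⟨hFiff _ e2 (mX12 x (le_of_lt e0) h),
                Or.inr (hGiff _ e3 (mX34 x (le_of_lt e0)))⟩⟩)
            · exact Or.inr (Or.inl ⟨h, hGiff _ e3 (mX34 x (le_of_lt e0))⟩)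
    have hSccl : IsOpen Sᶜ := by
      rw [isOpen_iff_mem_nhds]
      intro z hz
      have hzS : z ∉ S := hz
      rcases lt_or_ge (f z) (1/3) with h13 | h13
      · -- low region: ¬gA
        have hAF : ((1/4 : ℝ), z) ∈ F := by
          rcases hFG _ (mX14 z (by linarith)) with h | h
          · exact h
          · exact absurd ((hmem z).mpr (Or.inl ⟨h13, h⟩)) hzS
        filter_upwards [evlt (1/3) z h13, ev (1/4) OF hOF z (hFO _ hAF)] with x e0 e1
        intro hS
        rw [hmem x] at hS
        rcases hS with ⟨_, hG⟩ | ⟨hgt, _⟩ | ⟨hge, _, _⟩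
        · exact hnot _ (hFiff _ e1 (mX14 x (by linarith))) hG
        · linarith
        · linarith
      · rcases lt_or_ge (2/3) (f z) with h23 | h23
        · -- high region: ¬gC
          have hCF : ((3/4 : ℝ), z) ∈ F := by
            rcases hFG _ (mX34 z (by linarith)) with h | h
            · exact h
            · exact absurd ((hmem z).mpr (Or.inr (Or.inl ⟨h23, h⟩))) hzS
          filter_upwards [evgt (2/3) z h23, ev (3/4) OF hOF z (hFO _ hCF)] with x e0 e1
          intro hS
          rw [hmem x] at hS
          rcases hS with ⟨hlt, _⟩ | ⟨_, hG⟩ | ⟨_, hle, _⟩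
          · linarith
          · exact hnot _ (hFiff _ e1 (mX34 x (by linarith))) hG
          · linarith
        · -- mid region
          have hX1 : ((1/4 : ℝ), z) ∈ Xplus f := mX14 z h23
          have hX2 : ((1/2 : ℝ), z) ∈ Xplus f := mX12 z h13 h23
          have hX3 : ((3/4 : ℝ), z) ∈ Xplus f := mX34 z h13
          rcases hFG _ hX2 with hBF | hBG
          · -- middle point in F : then both outer must be in F
            have hACF : ((1/4 : ℝ), z) ∈ F ∧ ((3/4 : ℝ), z) ∈ F := by
              constructor
              · rcases hFG _ hX1 with h | h
                · exact h
                · exact absurd ((hmem z).mpr (Or.inr (Or.inr ⟨h13, h23, Or.inr ⟨hBF, Or.inl h⟩⟩))) hzS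
              · rcases hFG _ hX3 with h | h
                · exact h
                · exact absurd ((hmem z).mpr (Or.inr (Or.inr ⟨h13, h23, Or.inr ⟨hBF, Or.inr h⟩⟩))) hzS
            filter_upwards [ev (1/4) OF hOF z (hFO _ hACF.1), ev (3/4) OF hOF z (hFO _ hACF.2)]
              with x e1 e3
            intro hS
            rw [hmem x] at hS
            rcases hS with ⟨hlt, hG⟩ | ⟨hgt, hG⟩ | ⟨hge, hle, hpat⟩
            · exact hnot _ (hFiff _ e1 (mX14 x (by linarith))) hG
            · exact hnot _ (hFiff _ e3 (mX34 x (by linarith))) hG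
            · rcases hpat with ⟨hG, _, _⟩ | ⟨_, hG | hG⟩
              · exact hnot _ (hFiff _ e1 (mX14 x hle)) hG
              · exact hnot _ (hFiff _ e1 (mX14 x hle)) hG
              · exact hnot _ (hFiff _ e3 (mX34 x hge)) hG
          · -- middle point in G
            rcases hFG _ hX1 with hAF | hAG
            · -- outer-left in F; then f z < 2/3
              have hlt2 : f z < 2/3 := by
                rcases lt_or_eq_of_le h23 with h | h
                · exact h
                · exact absurd ((seg23 z h).mpr hBG) (fun hg => hnot _ hAF hg)
              filter_upwards [evlt (2/3) z hlt2, ev (1/4) OF hOF z (hFO _ hAF),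
                ev (1/2) OG hOG z (hGO _ hBG)] with x e0 e1 e2
              intro hS
              rw [hmem x] at hS
              rcases hS with ⟨hlt, hG⟩ | ⟨hgt, _⟩ | ⟨hge, hle, hpat⟩
              · exact hnot _ (hFiff _ e1 (mX14 x (by linarith))) hG
              · linarith
              · rcases hpat with ⟨hG, _, _⟩ | ⟨hF2, _⟩
                · exact hnot _ (hFiff _ e1 (mX14 x hle)) hG
                · exact hnot _ hF2 (hGiff _ e2 (mX12 x hge hle))
            · -- outer-left in G; then ¬gC and f z > 1/3
              have hCF : ((3/4 : ℝ), z) ∈ F := by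
                rcases hFG _ hX3 with h | h
                · exact h
                · exact absurd ((hmem z).mpr (Or.inr (Or.inr ⟨h13, h23, Or.inl ⟨hAG, hBG, h⟩⟩))) hzS
              have hgt2 : 1/3 < f z := by
                rcases lt_or_eq_of_le h13 with h | h
                · exact h
                · exact absurd ((seg13 z h.symm).mp hBG) (fun hg => hnot _ hCF hg)
              filter_upwards [evgt (1/3) z hgt2, ev (1/2) OG hOG z (hGO _ hBG),
                ev (3/4) OF hOF z (hFO _ hCF)] with x e0 e2 e3
              intro hS
              rw [hmem x] at hS
              rcases hS with ⟨hlt, _⟩ | ⟨hgt, hG⟩ | ⟨hge, hle, hpat⟩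
              · linarith
              · exact hnot _ (hFiff _ e3 (mX34 x (by linarith))) hG
              · rcases hpat with ⟨_, _, hG⟩ | ⟨hF2, _⟩
                · exact hnot _ (hFiff _ e3 (mX34 x hge)) hG
                · exact hnot _ hF2 (hGiff _ e2 (mX12 x hge hle))
    have hclopen : IsClopen S := ⟨isOpen_compl_iff.mp hSccl, hSopen⟩
    have hx0 : x₀ ∈ S := by
      rw [hmem]
      rcases lt_or_ge (f x₀) (1/3) with h | h
      · exact Or.inl ⟨h, hall0 _ (mX14 x₀ (by linarith))⟩
      · rcases le_or_gt (f x₀) (2/3) with h' | h'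
        · exact Or.inr (Or.inr ⟨h, h', Or.inl ⟨hall0 _ (mX14 x₀ h'),
            hall0 _ (mX12 x₀ h h'), hall0 _ (mX34 x₀ h)⟩⟩)
        · exact Or.inr (Or.inl ⟨h', hall0 _ (mX34 x₀ h)⟩)
    have hx1 : x₁ ∉ S := by
      rw [hmem]
      intro hS
      rcases hS with ⟨_, hG⟩ | ⟨_, hG⟩ | ⟨_, _, hpat⟩
      · exact hnot _ (hall1 _ (hGsub hG)) hG
      · exact hnot _ (hall1 _ (hGsub hG)) hG
      · rcases hpat with ⟨hG, _, _⟩ | ⟨_, hG | hG⟩ <;> exact hnot _ (hall1 _ (hGsub hG)) hG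
    rcases isClopen_iff.mp hclopen with hE | hU
    · rw [hE] at hx0; exact hx0
    · rw [hU] at hx1; exact hx1 (mem_univ x₁)
  -- wrap-up
  by_cases h1 : ∃ x : Z, ∀ t : ℝ, (t, x) ∈ Xplus f → (t, x) ∈ G
  · obtain ⟨x₀, hx₀⟩ := h1
    right
    have hGuniv : ∀ x : Z, ∃ t : ℝ, (t, x) ∈ G := by
      intro x
      by_contra hcon
      push_neg at hcon
      have hallF : ∀ t : ℝ, (t, x) ∈ Xplus f → (t, x) ∈ F := by
        intro t ht
        rcases hFG _ ht with h | h
        · exact h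
        · exact absurd h (hcon t)
      exact key x₀ x hx₀ hallF
    constructor
    · rw [eq_univ_iff_forall]
      intro x
      obtain ⟨t, ht⟩ := hGuniv x
      exact ⟨(t, x), ht, rfl⟩
    · rintro y ⟨⟨t, x⟩, htx, rfl⟩
      simp only [mem_preimage, mem_Icc]
      by_contra hcon
      rw [not_and_or, not_le, not_le] at hcon
      have hX : (t, x) ∈ Xplus f := hFsub htx
      rcases hcon with h | h
      · have ht14 : t = 1/4 := Pset_low hX.2 h
        obtain ⟨s, hs⟩ := hGuniv x
        have hsX : (s, x) ∈ Xplus f := hGsub hs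
        have hs14 : s = 1/4 := Pset_low hsX.2 h
        exact absurd hs (fun hg => hnot _ (ht14 ▸ htx) (hs14 ▸ hg))
      · have ht34 : t = 3/4 := Pset_high hX.2 h
        obtain ⟨s, hs⟩ := hGuniv x
        have hsX : (s, x) ∈ Xplus f := hGsub hs
        have hs34 : s = 3/4 := Pset_high hsX.2 h
        exact absurd hs (fun hg => hnot _ (ht34 ▸ htx) (hs34 ▸ hg))
  · push_neg at h1
    left
    have hFuniv : ∀ x : Z, ∃ t : ℝ, (t, x) ∈ F := by
      intro x
      obtain ⟨t, htX, htG⟩ := h1 x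
      rcases hFG _ htX with h | h
      · exact ⟨t, h⟩
      · exact absurd h htG
    constructor
    · rw [eq_univ_iff_forall]
      intro x
      obtain ⟨t, ht⟩ := hFuniv x
      exact ⟨(t, x), ht, rfl⟩
    · rintro y ⟨⟨t, x⟩, htx, rfl⟩
      simp only [mem_preimage, mem_Icc]
      by_contra hcon
      rw [not_and_or, not_le, not_le] at hcon
      have hX : (t, x) ∈ Xplus f := hGsub htx
      rcases hcon with h | h
      · have ht14 : t = 1/4 := Pset_low hX.2 h
        obtain ⟨s, hs⟩ := hFuniv x
        have hsX : (s, x) ∈ Xplus f := hFsub hs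
        have hs14 : s = 1/4 := Pset_low hsX.2 h
        exact absurd hs (fun hg => hnot _ (hs14 ▸ hg) (ht14 ▸ htx))
      · have ht34 : t = 3/4 := Pset_high hX.2 h
        obtain ⟨s, hs⟩ := hFuniv x
        have hsX : (s, x) ∈ Xplus f := hFsub hs
        have hs34 : s = 3/4 := Pset_high hsX.2 h
        exact absurd hs (fun hg => hnot _ (hs34 ▸ hg) (ht34 ▸ htx))
end

section
/- For every metric continuum Z and all nonempty closed sets a, b, c ⊆ Z with a ∩ b ∩ c = ∅, there exist a metric continuum Z′, a continuous surjection g : Z′ → Z that is closed and monotone (i.e., g is a closed map and g⁻¹({z}) is connected for every z ∈ Z), and closed sets x, y, z ⊆ Z′ such that g⁻¹(a) ⊆ x, g⁻¹(b) ⊆ y, g⁻¹(c) ⊆ z, x ∩ y ∩ z = ∅ and x ∪ y ∪ z = Z′. -/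
open Metric Set Topology

/-!
Let `v : Z → ℝ³` be the vector of distances to `a`, `b`, `c`. Off the diagonal of `ℝ³`, the
radial projection from the diagonal sends `v z` to a point of the boundary of the standard
2-simplex, a circle. Blowing `Z` up along the (closed) set where `v` is constant, i.e. replacing
each such point by the whole circle, gives a compact space `Z' ⊆ Z × ∂Δ` whose projection to `Z`
is closed with fibres points or circles, so it is monotone and `Z'` is again connected. The three
facets `{sᵢ = 0}` of `∂Δ` pull back to a closed cover of `Z'` with empty intersection. A point over
`a` has `v₀ = 0 = min v`, and not all of `v` vanishes because `a ∩ b ∩ c = ∅`, so its direction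
lies in the facet `s₀ = 0`.
-/

section SimplexBoundary

variable {ι : Type*} [Fintype ι]

def simplexFacet (i : ι) : Set (ι → ℝ) := {s ∈ stdSimplex ℝ ι | s i = 0}

def simplexBoundary (ι : Type*) [Fintype ι] : Set (ι → ℝ) := ⋃ i, simplexFacet i

theorem mem_simplexBoundary {s : ι → ℝ} :
    s ∈ simplexBoundary ι ↔ s ∈ stdSimplex ℝ ι ∧ ∃ i, s i = 0 := by
  simp [simplexBoundary, simplexFacet, exists_and_left]

theorem isClosed_simplexFacet (i : ι) : IsClosed (simplexFacet i) :=
  (isClosed_stdSimplex ℝ ι).inter (isClosed_eq (continuous_apply i) continuous_const)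

theorem isCompact_simplexBoundary : IsCompact (simplexBoundary ι) :=
  (isCompact_stdSimplex ℝ ι).of_isClosed_subset (isClosed_iUnion_of_finite isClosed_simplexFacet)
    (iUnion_subset fun _ => sep_subset _ _)

theorem isConnected_simplexBoundary (hι : 2 < Fintype.card ι) :
    IsConnected (simplexBoundary ι) := by
  classical
  -- two facets of a simplex of dimension at least two share a vertex opposite to both
  have hmeet : ∀ i j : ι, (simplexFacet i ∩ simplexFacet j).Nonempty := by
    intro i j
    obtain ⟨k, -, hk⟩ := Finset.exists_mem_notMem_of_card_lt_card
      (Finset.card_le_two.trans_lt hι : ({i, j} : Finset ι).card < Finset.univ.card)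
    simp only [Finset.mem_insert, Finset.mem_singleton, not_or] at hk
    exact ⟨Pi.single k 1, ⟨single_mem_stdSimplex ℝ k, Pi.single_eq_of_ne (Ne.symm hk.1) 1⟩,
      single_mem_stdSimplex ℝ k, Pi.single_eq_of_ne (Ne.symm hk.2) 1⟩
  have hfacet : ∀ i, IsConnected (simplexFacet i) := fun i =>
    ⟨(hmeet i i).mono inter_subset_left, ((convex_stdSimplex ℝ ι).inter (convex_hyperplane
      (LinearMap.proj (R := ℝ) (φ := fun _ : ι => ℝ) i).isLinear 0)).isPreconnected⟩
  have : Nonempty ι := Fintype.card_pos_iff.1 (by omega)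
  exact IsConnected.iUnion_of_reflTransGen hfacet fun i j => .single (hmeet i j)

end SimplexBoundary

section RadialDirections

variable {ι : Type*} [Fintype ι] [Nonempty ι] {v s : ι → ℝ}

def minCoord (v : ι → ℝ) : ℝ := Finset.univ.inf' Finset.univ_nonempty v

theorem minCoord_le (v : ι → ℝ) (i : ι) : minCoord v ≤ v i :=
  Finset.inf'_le _ (Finset.mem_univ i)

theorem exists_eq_minCoord (v : ι → ℝ) : ∃ i, v i = minCoord v :=
  let ⟨i, _, h⟩ := Finset.exists_mem_eq_inf' Finset.univ_nonempty v
  ⟨i, h.symm⟩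

theorem continuous_minCoord : Continuous (minCoord : (ι → ℝ) → ℝ) :=
  Continuous.finset_inf'_apply _ fun i _ => continuous_apply i

def spread (v : ι → ℝ) : ℝ := ∑ i, (v i - minCoord v)

theorem spread_nonneg (v : ι → ℝ) : 0 ≤ spread v :=
  Finset.sum_nonneg fun i _ => sub_nonneg.2 (minCoord_le v i)

theorem spread_eq_zero_iff : spread v = 0 ↔ ∀ i, v i = minCoord v := by
  rw [spread, Finset.sum_eq_zero_iff_of_nonneg fun i _ => sub_nonneg.2 (minCoord_le v i)]
  simp only [Finset.mem_univ, true_implies, sub_eq_zero]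

theorem continuous_spread : Continuous (spread : (ι → ℝ) → ℝ) :=
  continuous_finsetSum _ fun i _ => (continuous_apply i).sub continuous_minCoord

/-- The points `s` of the boundary of the simplex with `v ∈ ℝ • 1 + [0, ∞) • s`: the radial
projection of `v`, seen from the diagonal, onto the boundary. -/
def radialDirections (v : ι → ℝ) : Set (ι → ℝ) :=
  {s ∈ simplexBoundary ι | ∀ i, v i - minCoord v = spread v * s i}

theorem radialDirections_of_spread_ne_zero (h : spread v ≠ 0) :
    radialDirections v = {fun i => (v i - minCoord v) / spread v} := by
  ext s
  refine ⟨fun hs => funext fun i => eq_div_of_mul_eq h (by rw [hs.2 i, mul_comm]), ?_⟩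
  rintro rfl
  have hpos : 0 < spread v := (spread_nonneg v).lt_of_ne' h
  obtain ⟨i, hi⟩ := exists_eq_minCoord v
  refine ⟨mem_iUnion.2 ⟨i, ⟨fun j => div_nonneg (sub_nonneg.2 (minCoord_le v j)) hpos.le, ?_⟩,
    by simp [hi]⟩, fun j => (mul_div_cancel₀ _ h).symm⟩
  rw [← Finset.sum_div]
  exact div_self h

theorem radialDirections_of_spread_eq_zero (h : spread v = 0) :
    radialDirections v = simplexBoundary ι := by
  ext s
  simp [radialDirections, h, spread_eq_zero_iff.1 h]

theorem isConnected_radialDirections (hι : 2 < Fintype.card ι) (v : ι → ℝ) :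
    IsConnected (radialDirections v) := by
  by_cases h : spread v = 0
  · rw [radialDirections_of_spread_eq_zero h]
    exact isConnected_simplexBoundary hι
  · rw [radialDirections_of_spread_ne_zero h]
    exact isConnected_singleton

theorem isClosed_radialDirections_graph :
    IsClosed {p : (ι → ℝ) × (ι → ℝ) | p.2 ∈ radialDirections p.1} := by
  have : {p : (ι → ℝ) × (ι → ℝ) | p.2 ∈ radialDirections p.1} = Prod.snd ⁻¹' simplexBoundary ι ∩
      ⋂ i, {p : (ι → ℝ) × (ι → ℝ) | p.1 i - minCoord p.1 = spread p.1 * p.2 i} := by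
    ext p
    simp [radialDirections]
  rw [this]
  exact (isCompact_simplexBoundary.isClosed.preimage continuous_snd).inter <|
    isClosed_iInter fun i =>
      isClosed_eq (((continuous_apply i).sub continuous_minCoord).comp continuous_fst)
        ((continuous_spread.comp continuous_fst).mul ((continuous_apply i).comp continuous_snd))

theorem apply_eq_zero_of_mem_radialDirections (hs : s ∈ radialDirections v) (hv : ∀ j, 0 ≤ v j)
    {i : ι} (hi : v i = 0) (hne : ∃ j, v j ≠ 0) : s i = 0 := by
  have hmin : minCoord v = 0 :=
    le_antisymm (hi ▸ minCoord_le v i) (Finset.le_inf' _ _ fun j _ => hv j)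
  have hspread : spread v ≠ 0 := by
    obtain ⟨j, hj⟩ := hne
    exact fun h => hj (by rw [spread_eq_zero_iff.1 h j, hmin])
  simpa [hi, hmin, hspread] using (hs.2 i).symm

theorem apply_eq_zero_of_mem_radialDirections_infDist {Y : Type*} [PseudoMetricSpace Y]
    {A : ι → Set Y} (hA : ∀ j, IsClosed (A j)) (hne : ∀ j, (A j).Nonempty) {y : Y}
    (hs : s ∈ radialDirections fun j => infDist y (A j)) {i : ι} (hi : y ∈ A i)
    (hout : ∃ j, y ∉ A j) : s i = 0 :=
  let ⟨j, hj⟩ := hout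
  apply_eq_zero_of_mem_radialDirections hs (fun _ => infDist_nonneg) (infDist_zero_of_mem hi)
    ⟨j, (((hA j).notMem_iff_infDist_pos (hne j)).1 hj).ne'⟩

end RadialDirections

section Connectedness

variable {X Y K : Type*} [TopologicalSpace X] [TopologicalSpace Y] [TopologicalSpace K]

theorem Topology.IsCoinducing.connectedSpace [ConnectedSpace Y] {f : X → Y}
    (hf : IsCoinducing f) (hfib : ∀ y, IsConnected (f ⁻¹' {y})) : ConnectedSpace X :=
  connectedSpace_iff_univ.2 <|
    hf.isConnected_preimage_of_isClosed hfib isClosed_univ isConnected_univ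

theorem isConnected_restrict_fst_preimage_singleton {S : Set (X × K)} {x : X}
    (h : IsConnected {k | (x, k) ∈ S}) : IsConnected ((fun p : S => p.1.1) ⁻¹' {x}) := by
  have himage : Subtype.val '' ((fun p : S => p.1.1) ⁻¹' {x}) = {x} ×ˢ {k | (x, k) ∈ S} := by
    ext ⟨y, k⟩
    simp only [mem_image, mem_preimage, mem_singleton_iff, Subtype.exists, exists_and_right,
      exists_eq_right, mem_prod, mem_ofPred_eq]
    constructor
    · rintro ⟨hp, rfl⟩
      exact ⟨rfl, hp⟩
    · rintro ⟨rfl, hp⟩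
      exact ⟨hp, rfl⟩
  have hc := (isConnected_singleton (x := x)).prod h
  rw [← himage] at hc
  exact ⟨hc.nonempty.of_image, IsInducing.subtypeVal.isPreconnected_image.1 hc.isPreconnected⟩

end Connectedness

section RadialBlowup

variable {ι X : Type*} [Fintype ι] [Nonempty ι] [TopologicalSpace X] {v : X → ι → ℝ}

def radialBlowup (v : X → ι → ℝ) : Set (X × (ι → ℝ)) := {p | p.2 ∈ radialDirections (v p.1)}

def radialBlowup.proj (v : X → ι → ℝ) : radialBlowup v → X := fun p => p.1.1

theorem radialBlowup.continuous_proj : Continuous (radialBlowup.proj v) :=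
  continuous_fst.comp continuous_subtype_val

theorem radialBlowup.isConnected_proj_preimage_singleton (hι : 2 < Fintype.card ι) (x : X) :
    IsConnected (radialBlowup.proj v ⁻¹' {x}) :=
  isConnected_restrict_fst_preimage_singleton (isConnected_radialDirections hι (v x))

theorem isCompact_radialBlowup [CompactSpace X] (hv : Continuous v) :
    IsCompact (radialBlowup v) :=
  (isCompact_univ.prod isCompact_simplexBoundary).of_isClosed_subset
    (isClosed_radialDirections_graph.preimage (hv.prodMap continuous_id))
    fun _ hp => ⟨trivial, hp.1⟩

end RadialBlowup

theorem exists_metricSpace_homeomorph (Z : Type*) [MetricSpace Z]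
    [TopologicalSpace.SeparableSpace Z] [Nonempty Z] :
    ∃ (X : Type) (_ : MetricSpace X), Nonempty (X ≃ₜ Z) :=
  ⟨range (kuratowskiEmbedding Z), inferInstance,
    ⟨(kuratowskiEmbedding.isometry Z).isometryEquivOnRange.toHomeomorph.symm⟩⟩

/-- For every metric continuum `Z` and nonempty closed sets `a, b, c` with empty
intersection, there is a closed monotone continuous surjection `g` from a metric
continuum `Z′` onto `Z` such that the preimages of `a`, `b`, `c` can be enlarged
to a closed cover of `Z′` by three sets with empty intersection. -/
theorem exists_monotone_preimage_cover (Z : Type*) [MetricSpace Z] [CompactSpace Z]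
    [ConnectedSpace Z] (a b c : Set Z) (ha : IsClosed a) (hb : IsClosed b)
    (hc : IsClosed c) (hane : a.Nonempty) (hbne : b.Nonempty) (hcne : c.Nonempty)
    (habc : a ∩ b ∩ c = ∅) :
    ∃ (Z' : Type) (_ : MetricSpace Z'), CompactSpace Z' ∧ ConnectedSpace Z' ∧
      ∃ g : Z' → Z, Continuous g ∧ Function.Surjective g ∧ IsClosedMap g ∧
        (∀ z : Z, IsConnected (g ⁻¹' {z})) ∧
        ∃ x y z : Set Z', IsClosed x ∧ IsClosed y ∧ IsClosed z ∧
          g ⁻¹' a ⊆ x ∧ g ⁻¹' b ⊆ y ∧ g ⁻¹' c ⊆ z ∧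
          x ∩ y ∩ z = ∅ ∧ x ∪ y ∪ z = Set.univ := by
  obtain ⟨X, _, ⟨h⟩⟩ := exists_metricSpace_homeomorph Z
  have : CompactSpace X := h.symm.compactSpace
  let A : Fin 3 → Set Z := ![a, b, c]
  have hA : ∀ i, IsClosed (A i) := fun i => by fin_cases i <;> assumption
  have hAne : ∀ i, (A i).Nonempty := fun i => by fin_cases i <;> assumption
  have hout : ∀ z, ∃ i, z ∉ A i := fun z => by
    by_contra! hin
    exact habc.subset ⟨⟨hin 0, hin 1⟩, hin 2⟩
  let v : X → Fin 3 → ℝ := fun x i => infDist (h x) (A i)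
  have hv : Continuous v := continuous_pi fun i => (continuous_infDist_pt _).comp h.continuous
  have : CompactSpace (radialBlowup v) := isCompact_iff_compactSpace.1 (isCompact_radialBlowup hv)
  let g : radialBlowup v → Z := h ∘ radialBlowup.proj v
  have hg : Continuous g := h.continuous.comp radialBlowup.continuous_proj
  have hfib : ∀ z, IsConnected (g ⁻¹' {z}) := fun z => by
    rw [preimage_comp, ← h.image_symm, image_singleton]
    exact radialBlowup.isConnected_proj_preimage_singleton (by simp) _
  have hsurj : Function.Surjective g := fun z => (hfib z).nonempty
  have hcover : ∀ i, g ⁻¹' A i ⊆ {p | p.1.2 i = 0} := fun i p hp =>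
    apply_eq_zero_of_mem_radialDirections_infDist hA hAne p.2 hp (hout _)
  have hclosed : ∀ i, IsClosed {p : radialBlowup v | p.1.2 i = 0} := fun i =>
    isClosed_eq ((continuous_apply i).comp (continuous_snd.comp continuous_subtype_val))
      continuous_const
  refine ⟨radialBlowup v, inferInstance, inferInstance,
    (hg.isClosedMap.isQuotientMap hg hsurj).isCoinducing.connectedSpace hfib, g, hg, hsurj,
    hg.isClosedMap, hfib, _, _, _, hclosed 0, hclosed 1, hclosed 2, hcover 0, hcover 1, hcover 2,
    eq_empty_of_forall_notMem fun p ⟨⟨h0, h1⟩, h2⟩ => ?_, eq_univ_of_forall fun p => ?_⟩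
  · obtain ⟨⟨-, hsum⟩, -⟩ := mem_simplexBoundary.1 p.2.1
    simp_all [Fin.sum_univ_three]
  · obtain ⟨-, i, hi⟩ := mem_simplexBoundary.1 p.2.1
    fin_cases i <;> simp_all
end

section
/- Let {⟨Xₙ, fₙ⟩ : n < ω} be an inverse sequence of continua in which every bonding map fₙ₊₁ : Xₙ₊₁ → Xₙ is a weakly confluent continuous surjection, let X_ω be its inverse limit and π₀ : X_ω → X₀ the projection. Then π₀ is a weakly confluent continuous surjection of the continuum X_ω onto X₀. -/
/-!
Threads of the inverse sequence through the tower of subcontinua `S n` form the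
intersection of the decreasing sets `threadsBelow f n ∩ Π S`, each a continuous image of the
continuum `Π S`; a decreasing intersection of continua is a continuum. For weak confluence of
`π₀`, lift a subcontinuum `K ⊆ X₀` by weak confluence of the bonding maps to subcontinua
`S n ⊆ X n` with `fₙ '' S (n + 1) = S n`, `S 0 = K`; the threads through `S` form a
subcontinuum mapped onto `K`.
-/

universe u

/-- A continuous surjection is weakly confluent if every subcontinuum of the range
is the image of a subcontinuum of the domain. -/
def WeaklyConfluent {Y X : Type*} [TopologicalSpace Y] [TopologicalSpace X]
    (f : Y → X) : Prop :=
  ∀ K : Set X, IsCompact K → IsConnected K →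
    ∃ L : Set Y, IsCompact L ∧ IsConnected L ∧ f '' L = K

open Set Function Topology

theorem IsPreconnected.iInter_of_directed {α ι : Type*} [TopologicalSpace α] [T2Space α]
    [Nonempty ι] {D : ι → Set α} (hD : Directed (· ⊇ ·) D) (hc : ∀ i, IsCompact (D i))
    (hp : ∀ i, IsPreconnected (D i)) : IsPreconnected (⋂ i, D i) := by
  set T := ⋂ i, D i
  have hTc : IsCompact T :=
    (hc (Classical.arbitrary ι)).of_isClosed_subset (isClosed_iInter fun i => (hc i).isClosed)
      (iInter_subset _ _)
  rw [isPreconnected_iff_subset_of_fully_disjoint_closed hTc.isClosed]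
  intro t t' ht ht' hTt htt'
  obtain ⟨U, V, hU, hV, htU, ht'V, hUV⟩ := SeparatedNhds.of_isCompact_isCompact
    (hTc.inter_right ht) (hTc.inter_right ht') (htt'.mono inter_subset_right inter_subset_right)
  have hTUV : T ⊆ U ∪ V := fun x hx =>
    (hTt hx).imp (fun h => htU ⟨hx, h⟩) (fun h => ht'V ⟨hx, h⟩)
  obtain ⟨i, hi⟩ := exists_subset_nhds_of_isCompact hD hc fun x hx =>
    (hU.union hV).mem_nhds (hTUV hx)
  have hTD : T ⊆ D i := iInter_subset _ i
  rcases (hp i).subset_or_subset hU hV hUV hi with hDU | hDV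
  · refine Or.inl fun x hx => (hTt hx).resolve_right fun hxt' => ?_
    exact hUV.ne_of_mem (hDU (hTD hx)) (ht'V ⟨hx, hxt'⟩) rfl
  · refine Or.inr fun x hx => (hTt hx).resolve_left fun hxt => ?_
    exact hUV.ne_of_mem (htU ⟨hx, hxt⟩) (hDV (hTD hx)) rfl

theorem exists_thread_of_forall_exists_preimage {X : ℕ → Type*} (f : ∀ n, X (n + 1) → X n)
    (p : ∀ n, X n → Prop) (hlift : ∀ n x, p n x → ∃ y, p (n + 1) y ∧ f n y = x)
    {x : X 0} (hx : p 0 x) : ∃ u : ∀ n, X n, u 0 = x ∧ ∀ n, p n (u n) ∧ f n (u (n + 1)) = u n := by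
  choose g hg using hlift
  let v : ∀ n, {y // p n y} := fun n =>
    Nat.rec ⟨x, hx⟩ (fun n y => ⟨g n y.1 y.2, (hg n y.1 y.2).1⟩) n
  exact ⟨fun n => (v n).1, rfl, fun n => ⟨(v n).2, (hg n _ _).2⟩⟩

theorem isConnected_preimage_val_iff {α : Type*} [TopologicalSpace α] {s t : Set α} :
    IsConnected (Subtype.val ⁻¹' t : Set s) ↔ IsConnected (s ∩ t) := by
  rw [← Subtype.image_preimage_val, IsConnected, IsConnected, image_nonempty,
    IsInducing.subtypeVal.isPreconnected_image]

theorem exists_tower_of_weaklyConfluent {X : ℕ → Type*} [∀ n, TopologicalSpace (X n)]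
    {f : ∀ n, X (n + 1) → X n} (hfw : ∀ n, WeaklyConfluent (f n)) {K : Set (X 0)}
    (hKc : IsCompact K) (hKconn : IsConnected K) :
    ∃ S : ∀ n, Set (X n), S 0 = K ∧ (∀ n, IsCompact (S n)) ∧ (∀ n, IsConnected (S n)) ∧
      ∀ n, f n '' S (n + 1) = S n := by
  obtain ⟨S, rfl, hS⟩ := exists_thread_of_forall_exists_preimage (X := fun n => Set (X n))
    (fun n => image (f n)) (fun _ A => IsCompact A ∧ IsConnected A)
    (fun n A hA => by
      obtain ⟨L, hLc, hLconn, hL⟩ := hfw n A hA.1 hA.2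
      exact ⟨L, ⟨hLc, hLconn⟩, hL⟩) ⟨hKc, hKconn⟩
  exact ⟨S, rfl, fun n => (hS n).1.1, fun n => (hS n).1.2, fun n => (hS n).2⟩

section Threads

variable {X : ℕ → Type*} (f : ∀ n, X (n + 1) → X n)

def threads : Set (∀ n, X n) := {u | ∀ n, f n (u (n + 1)) = u n}

def threadsBelow (n : ℕ) : Set (∀ n, X n) := {u | ∀ k < n, f k (u (k + 1)) = u k}

/-- Overwrites the coordinates `n - 1, …, 0` of `u`, from the top down, by the image of the
coordinate above: a retraction onto `threadsBelow f n`. -/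
def threadBelow : ℕ → (∀ n, X n) → ∀ n, X n
  | 0, u => u
  | n + 1, u => threadBelow n (update u n (f n (u (n + 1))))

theorem threadBelow_apply_of_le {n k : ℕ} (hk : n ≤ k) (u : ∀ n, X n) :
    threadBelow f n u k = u k := by
  induction n generalizing u with
  | zero => rfl
  | succ n ih => rw [threadBelow, ih (by omega), update_of_ne (by omega)]

theorem threadBelow_mem_threadsBelow (n : ℕ) (u : ∀ n, X n) :
    threadBelow f n u ∈ threadsBelow f n := by
  induction n generalizing u with
  | zero => intro k hk; omega
  | succ n ih =>
    intro k hk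
    rcases Nat.lt_succ_iff_lt_or_eq.mp hk with hk | rfl
    · exact ih _ k hk
    · rw [threadBelow, threadBelow_apply_of_le f le_rfl, threadBelow_apply_of_le f (by omega),
        update_self, update_of_ne (by omega)]

theorem threadBelow_eq_self {n : ℕ} {u : ∀ n, X n} (hu : u ∈ threadsBelow f n) :
    threadBelow f n u = u := by
  induction n generalizing u with
  | zero => rfl
  | succ n ih =>
    rw [threadBelow, hu n n.lt_succ_self, update_eq_self]
    exact ih fun k hk => hu k (by omega)

theorem threadBelow_mem_pi {S : ∀ n, Set (X n)} (hS : ∀ n, MapsTo (f n) (S (n + 1)) (S n))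
    (n : ℕ) {u : ∀ n, X n} (hu : u ∈ univ.pi S) : threadBelow f n u ∈ univ.pi S := by
  induction n generalizing u with
  | zero => exact hu
  | succ n ih =>
    exact ih ((update_mem_pi_iff_of_mem hu).mpr fun _ => hS n (hu (n + 1) (mem_univ _)))

theorem image_threadBelow_univ_pi {S : ∀ n, Set (X n)}
    (hS : ∀ n, MapsTo (f n) (S (n + 1)) (S n)) (n : ℕ) :
    threadBelow f n '' univ.pi S = threadsBelow f n ∩ univ.pi S := by
  refine Subset.antisymm ?_ fun u hu => ⟨u, hu.2, threadBelow_eq_self f hu.1⟩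
  rintro _ ⟨u, hu, rfl⟩
  exact ⟨threadBelow_mem_threadsBelow f n u, threadBelow_mem_pi f hS n hu⟩

theorem antitone_threadsBelow : Antitone (threadsBelow f) :=
  fun _ _ hmn _ hu k hk => hu k (lt_of_lt_of_le hk hmn)

theorem threads_eq_iInter_threadsBelow : threads f = ⋂ n, threadsBelow f n := by
  ext u
  simp only [threads, threadsBelow, mem_ofPred_eq, mem_iInter]
  exact ⟨fun hu _ k _ => hu k, fun hu k => hu (k + 1) k k.lt_succ_self⟩

theorem image_threads_inter_univ_pi {S : ∀ n, Set (X n)} (hS : ∀ n, f n '' S (n + 1) = S n) :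
    (fun u => u 0) '' (threads f ∩ univ.pi S) = S 0 := by
  refine Subset.antisymm (image_subset_iff.mpr fun u hu => hu.2 0 (mem_univ 0)) fun x hx => ?_
  obtain ⟨u, rfl, hu⟩ := exists_thread_of_forall_exists_preimage f (fun n y => y ∈ S n)
    (fun n y hy => by rwa [← hS n] at hy) hx
  exact ⟨u, ⟨fun n => (hu n).2, fun n _ => (hu n).1⟩, rfl⟩

variable [∀ n, TopologicalSpace (X n)]

theorem continuous_threadBelow (hfc : ∀ n, Continuous (f n)) (n : ℕ) :
    Continuous (threadBelow f n) := by
  induction n with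
  | zero => exact continuous_id
  | succ n ih =>
    exact ih.comp (continuous_id.update n ((hfc n).comp (continuous_apply (n + 1))))

variable [∀ n, T2Space (X n)]

theorem isClosed_threads (hfc : ∀ n, Continuous (f n)) : IsClosed (threads f) := by
  simp only [threads, ofPred_forall]
  exact isClosed_iInter fun n =>
    isClosed_eq ((hfc n).comp (continuous_apply (n + 1))) (continuous_apply n)

variable {S : ∀ n, Set (X n)}

theorem isCompact_threads_inter_univ_pi (hfc : ∀ n, Continuous (f n))
    (hSc : ∀ n, IsCompact (S n)) : IsCompact (threads f ∩ univ.pi S) :=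
  (isCompact_univ_pi hSc).inter_left (isClosed_threads f hfc)

theorem isConnected_threads_inter_univ_pi (hfc : ∀ n, Continuous (f n))
    (hSc : ∀ n, IsCompact (S n)) (hS_conn : ∀ n, IsConnected (S n))
    (hS : ∀ n, f n '' S (n + 1) = S n) : IsConnected (threads f ∩ univ.pi S) := by
  have hmaps : ∀ n, MapsTo (f n) (S (n + 1)) (S n) := fun n => by
    rw [← hS n]; exact mapsTo_image _ _
  refine ⟨(image_threads_inter_univ_pi f hS ▸ (hS_conn 0).nonempty).of_image, ?_⟩
  rw [threads_eq_iInter_threadsBelow, iInter_inter]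
  refine IsPreconnected.iInter_of_directed
    ((antitone_threadsBelow f).inter antitone_const).directed_ge (fun n => ?_) (fun n => ?_)
  · rw [← image_threadBelow_univ_pi f hmaps]
    exact (isCompact_univ_pi hSc).image (continuous_threadBelow f hfc n)
  · rw [← image_threadBelow_univ_pi f hmaps]
    exact (isPreconnected_univ_pi fun n => (hS_conn n).isPreconnected).image _
      (continuous_threadBelow f hfc n).continuousOn

end Threads

/-- The inverse limit of an inverse sequence of continua with weakly confluent
continuous surjective bonding maps is a continuum, and the projection to the
first space is a weakly confluent continuous surjection. -/
theorem inverseLimit_weakly_confluent (X : ℕ → Type u)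
    [∀ n, TopologicalSpace (X n)] [∀ n, CompactSpace (X n)] [∀ n, T2Space (X n)]
    [∀ n, ConnectedSpace (X n)]
    (f : ∀ n, X (n + 1) → X n) (hfc : ∀ n, Continuous (f n))
    (hfs : ∀ n, Function.Surjective (f n))
    (hfw : ∀ n, WeaklyConfluent (f n)) :
    let Xω := {u : ∀ n, X n // ∀ n, f n (u (n + 1)) = u n}
    let π₀ : Xω → X 0 := fun u => u.val 0
    CompactSpace Xω ∧ T2Space Xω ∧ ConnectedSpace Xω ∧
    Continuous π₀ ∧ Function.Surjective π₀ ∧ WeaklyConfluent π₀ := by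
  intro Xω π₀
  have hS_univ : ∀ n, f n '' univ = univ := fun n => image_univ_of_surjective (hfs n)
  have hconn : IsConnected (threads f) := by
    simpa using isConnected_threads_inter_univ_pi f hfc (fun _ => isCompact_univ)
      (fun _ => isConnected_univ) hS_univ
  have hproj : (fun u => u 0) '' threads f = univ := by
    simpa using image_threads_inter_univ_pi f (S := fun _ => univ) hS_univ
  refine ⟨isCompact_iff_compactSpace.mp (isClosed_threads f hfc).isCompact, inferInstance,
    isConnected_iff_connectedSpace.mp hconn, (continuous_apply 0).comp continuous_subtype_val,
    fun x => ?_, fun K hKc hKconn => ?_⟩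
  · obtain ⟨u, hu, rfl⟩ := hproj.symm ▸ mem_univ x
    exact ⟨⟨u, hu⟩, rfl⟩
  obtain ⟨S, rfl, hSc, hS_conn, hS⟩ := exists_tower_of_weaklyConfluent hfw hKc hKconn
  have himg : Subtype.val '' (Subtype.val ⁻¹' univ.pi S : Set Xω) = threads f ∩ univ.pi S :=
    Subtype.image_preimage_val (threads f) _
  refine ⟨Subtype.val ⁻¹' univ.pi S, ?_, ?_, ?_⟩
  · rw [Subtype.isCompact_iff, himg]
    exact isCompact_threads_inter_univ_pi f hfc hSc
  · exact isConnected_preimage_val_iff.mpr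
      (isConnected_threads_inter_univ_pi f hfc hSc hS_conn hS)
  · rw [← image_threads_inter_univ_pi f hS, ← himg, image_image]
end

section
/- Let f : Y → X be a continuous surjection between compact Hausdorff spaces with X of infinite weight. Then there exist a compact Hausdorff space Z and continuous surjections g : Y → Z and h : Z → X with f = h ∘ g such that the weight of Z equals the weight of X, and moreover: if Y is hereditarily indecomposable then Z is hereditarily indecomposable, and if Y has dimension at most one in the sense that for all closed A, B, C ⊆ Y with A ∩ B ∩ C = ∅ there exist closed Y₀, Y₁, Y₂ with A ⊆ Y₀, B ⊆ Y₁, C ⊆ Y₂, Y₀ ∩ Y₁ ∩ Y₂ = ∅ and Y₀ ∪ Y₁ ∪ Y₂ = Y, then Z has the same property. -/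
universe u

/-- A space is hereditarily indecomposable if whenever two subcontinua
(nonempty compact connected subsets) intersect, one is contained in the other. -/
def HereditarilyIndecomposable (X : Type*) [TopologicalSpace X] : Prop :=
  ∀ K L : Set X, IsCompact K → IsConnected K → IsCompact L → IsConnected L →
    (K ∩ L).Nonempty → K ⊆ L ∨ L ⊆ K

/-- Dimension at most one, phrased via closed covers. -/
def DimLeOne (Y : Type*) [TopologicalSpace Y] : Prop :=
  ∀ A B C : Set Y, IsClosed A → IsClosed B → IsClosed C → A ∩ B ∩ C = ∅ →
    ∃ Y₀ Y₁ Y₂ : Set Y, IsClosed Y₀ ∧ IsClosed Y₁ ∧ IsClosed Y₂ ∧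
      A ⊆ Y₀ ∧ B ⊆ Y₁ ∧ C ⊆ Y₂ ∧ Y₀ ∩ Y₁ ∩ Y₂ = ∅ ∧ Y₀ ∪ Y₁ ∪ Y₂ = Set.univ

/-- The weight of a topological space: the least cardinality of a base for its topology. -/
noncomputable def weight (X : Type u) [TopologicalSpace X] : Cardinal.{u} :=
  ⨅ B : {B : Set (Set X) // TopologicalSpace.IsTopologicalBasis B}, Cardinal.mk B.1

/-!
`Z` is the image of `Y` in `ℝ^F` under evaluation, for a family `F` of continuous functions on `Y`
of cardinality `w(X)` obtained by a Löwenheim–Skolem closure argument. `F` contains `φ ∘ f` for a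
point-separating family of `φ`'s on `X` of size `w(X)`, so `f` factors through `Z`. It is closed
under `⊔`, `⊓`, `-` and contains the rational constants, so the sublevel sets `{z | z u ≤ 0}`,
`u ∈ F`, fit between any closed subset of `Z` and any open superset; their complements then form a
base, whence `w(Z) ≤ |F|`. Finally `F` is closed under Skolem functions choosing sublevel sets
that witness dimension `≤ 1` or form crooked covers, which characterize hereditary
indecomposability. Both properties may be tested on any family of closed sets fitting between
closed and open sets, and the sublevel sets of `F` in `Y` are the preimages of those in `Z`, so the
properties pass from `Y` to `Z`.
-/

open TopologicalSpace Set Function Cardinal Topology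

section Weight

variable {X : Type u} [TopologicalSpace X]

theorem weight_le_mk {B : Set (Set X)} (hB : IsTopologicalBasis B) : weight X ≤ #B :=
  ciInf_le' _ (⟨B, hB⟩ : {B : Set (Set X) // IsTopologicalBasis B})

variable (X) in
theorem exists_isTopologicalBasis_mk_eq_weight :
    ∃ B : Set (Set X), IsTopologicalBasis B ∧ #B = weight X := by
  have : Nonempty {B : Set (Set X) // IsTopologicalBasis B} := ⟨⟨_, isTopologicalBasis_opens⟩⟩
  obtain ⟨⟨B, hB⟩, hB'⟩ := csInf_mem (range_nonempty fun B : {B : Set (Set X) //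
    IsTopologicalBasis B} => #B.1)
  exact ⟨B, hB, hB'⟩

theorem TopologicalSpace.IsTopologicalBasis.injective_setOf_mem [T0Space X] {B : Set (Set X)}
    (hB : IsTopologicalBasis B) : Injective fun x : X => {b : B | x ∈ (b : Set X)} := by
  intro x y hxy
  have hmem (t : Set X) : t ∈ B ∧ x ∈ t ↔ t ∈ B ∧ y ∈ t :=
    and_congr_right fun ht => (congrArg ((⟨t, ht⟩ : B) ∈ ·) hxy).to_iff
  refine Inseparable.eq (hB.nhds_hasBasis.eq_of_same_basis ?_)
  simpa only [hmem] using hB.nhds_hasBasis (a := y)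

theorem aleph0_le_weight_iff [T0Space X] : ℵ₀ ≤ weight X ↔ Infinite X := by
  refine ⟨fun hw => ?_, fun hX => ?_⟩
  · by_contra hfin
    have : Finite X := not_infinite_iff_finite.mp hfin
    exact hw.not_gt ((weight_le_mk isTopologicalBasis_opens).trans_lt (lt_aleph0_of_finite _))
  · obtain ⟨B, hB, hBw⟩ := exists_isTopologicalBasis_mk_eq_weight X
    rw [← hBw, ← not_lt, lt_aleph0_iff_finite]
    intro hBfin
    have := Finite.of_injective _ hB.injective_setOf_mem
    exact not_finite X

end Weight

section Interpolating

variable {X Z : Type*} [TopologicalSpace X] [TopologicalSpace Z]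

structure IsInterpolating (𝒞 : Set (Set X)) : Prop where
  isClosed : ∀ C ∈ 𝒞, IsClosed C
  exists_between : ∀ ⦃A W : Set X⦄, IsClosed A → IsOpen W → A ⊆ W → ∃ C ∈ 𝒞, A ⊆ C ∧ C ⊆ W

namespace IsInterpolating

variable {𝒞 : Set (Set X)}

theorem isTopologicalBasis_compl [T1Space X] (h𝒞 : IsInterpolating 𝒞) :
    IsTopologicalBasis (compl '' 𝒞) := by
  refine isTopologicalBasis_of_isOpen_of_nhds ?_ fun x W hx hW => ?_
  · rintro _ ⟨C, hC, rfl⟩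
    exact (h𝒞.isClosed C hC).isOpen_compl
  · obtain ⟨C, hC, hWC, hCx⟩ := h𝒞.exists_between hW.isClosed_compl isOpen_compl_singleton
      (compl_subset_compl.mpr (singleton_subset_iff.mpr hx))
    exact ⟨Cᶜ, mem_image_of_mem _ hC, fun hxC => hCx hxC rfl, compl_subset_comm.mp hWC⟩

theorem of_nhds [CompactSpace X] (hclosed : ∀ C ∈ 𝒞, IsClosed C) (hempty : ∅ ∈ 𝒞)
    (hunion : SupClosed 𝒞) (hnhds : ∀ x W, IsOpen W → x ∈ W → ∃ C ∈ 𝒞, C ∈ 𝓝 x ∧ C ⊆ W) :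
    IsInterpolating 𝒞 := by
  refine ⟨hclosed, fun A W hA hW hAW => ?_⟩
  choose C hC hCx hCW using fun x : A => hnhds x W hW (hAW x.2)
  obtain ⟨t, ht⟩ := hA.isCompact.elim_nhds_subcover' (fun x hx => C ⟨x, hx⟩)
    fun x hx => hCx ⟨x, hx⟩
  refine ⟨t.sup C, Finset.sup_induction hempty hunion fun x _ => hC x, ?_,
    Finset.sup_le fun x _ => hCW x⟩
  rwa [Finset.sup_set_eq_biUnion]

theorem image {π : X → Z} (hcl : IsClosedMap π) (hc : Continuous π) (hs : Surjective π)
    (h𝒞 : IsInterpolating 𝒞) : IsInterpolating ((π '' ·) '' 𝒞) := by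
  refine ⟨?_, fun A W hA hW hAW => ?_⟩
  · rintro _ ⟨C, hC, rfl⟩
    exact hcl _ (h𝒞.isClosed C hC)
  · obtain ⟨C, hC, hAC, hCW⟩ :=
      h𝒞.exists_between (hA.preimage hc) (hW.preimage hc) (preimage_mono hAW)
    exact ⟨π '' C, mem_image_of_mem _ hC, (image_preimage_eq A hs).ge.trans (image_mono hAC),
      (image_mono hCW).trans (image_preimage_subset π W)⟩

end IsInterpolating

theorem TopologicalSpace.IsTopologicalBasis.isInterpolating_biUnion_closure [CompactSpace X]
    [RegularSpace X] {B : Set (Set X)} (hB : IsTopologicalBasis B) :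
    IsInterpolating (range fun s : Finset B => ⋃ b ∈ s, closure (b : Set X)) := by
  classical
  refine .of_nhds ?_ ⟨∅, by simp⟩ ?_ fun x W hW hx => ?_
  · rintro _ ⟨s, rfl⟩
    exact isClosed_biUnion_finset fun b _ => isClosed_closure
  · rintro _ ⟨s, rfl⟩ _ ⟨t, rfl⟩
    exact ⟨s ∪ t, Finset.set_biUnion_union s t _⟩
  · obtain ⟨b, hb, hxb, hbW⟩ := hB.exists_closure_subset (hW.mem_nhds hx)
    refine ⟨_, ⟨{⟨b, hb⟩}, rfl⟩, ?_, ?_⟩ <;> simp only [Finset.mem_singleton, iUnion_iUnion_eq_left]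
    · exact Filter.mem_of_superset ((hB.isOpen hb).mem_nhds hxb) subset_closure
    · exact hbW

def sublevel (u : C(X, ℝ)) : Set X := u ⁻¹' Iic 0

theorem isInterpolating_range_sublevel [NormalSpace X] :
    IsInterpolating (range (sublevel : C(X, ℝ) → Set X)) := by
  refine ⟨?_, fun A W hA hW hAW => ?_⟩
  · rintro _ ⟨u, rfl⟩
    exact isClosed_Iic.preimage u.continuous
  · obtain ⟨φ, hφA, hφW, -⟩ := exists_continuous_zero_one_of_isClosed hA hW.isClosed_compl
      (disjoint_compl_right_iff_subset.mpr hAW)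
    refine ⟨_, ⟨φ - ContinuousMap.const X (1 / 2), rfl⟩, fun x hx => ?_, fun x hx => ?_⟩
    · norm_num [sublevel, hφA hx]
    · by_contra hxW
      norm_num [sublevel, hφW hxW] at hx

end Interpolating

theorem weight_le_of_surjective {X Z : Type u} [TopologicalSpace X] [TopologicalSpace Z]
    [CompactSpace Z] [T2Space Z] [T2Space X] {π : Z → X} (hc : Continuous π)
    (hs : Surjective π) : weight X ≤ max ℵ₀ (weight Z) := by
  classical
  obtain ⟨B, hB, hBw⟩ := exists_isTopologicalBasis_mk_eq_weight Z
  refine (weight_le_mk ((hB.isInterpolating_biUnion_closure.image hc.isClosedMap hc hs)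
    |>.isTopologicalBasis_compl)).trans ?_
  calc _ ≤ #(Finset B) := mk_image_le.trans (mk_image_le.trans mk_range_le)
    _ ≤ #(List B) := mk_le_of_surjective List.toFinset_surjective
    _ ≤ max ℵ₀ (weight Z) := hBw ▸ mk_list_le_max B

section DimensionOne

variable {X Z : Type*}

def IsDimOneCover (A B C Y₀ Y₁ Y₂ : Set X) : Prop :=
  A ⊆ Y₀ ∧ B ⊆ Y₁ ∧ C ⊆ Y₂ ∧ Y₀ ∩ Y₁ ∩ Y₂ = ∅ ∧ Y₀ ∪ Y₁ ∪ Y₂ = Set.univ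

def DimLeOneOn (𝒞 : Set (Set X)) : Prop :=
  ∀ A ∈ 𝒞, ∀ B ∈ 𝒞, ∀ C ∈ 𝒞, A ∩ B ∩ C = ∅ →
    ∃ Y₀ ∈ 𝒞, ∃ Y₁ ∈ 𝒞, ∃ Y₂ ∈ 𝒞, IsDimOneCover A B C Y₀ Y₁ Y₂

theorem IsDimOneCover.of_preimage {g : X → Z} (hg : Surjective g) {A B C Y₀ Y₁ Y₂ : Set Z}
    (h : IsDimOneCover (g ⁻¹' A) (g ⁻¹' B) (g ⁻¹' C) (g ⁻¹' Y₀) (g ⁻¹' Y₁) (g ⁻¹' Y₂)) :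
    IsDimOneCover A B C Y₀ Y₁ Y₂ := by
  simpa only [IsDimOneCover, hg.preimage_subset_preimage_iff, ← preimage_inter, ← preimage_union,
    preimage_eq_empty_iff, preimage_eq_univ_iff, hg.range_eq, disjoint_univ, univ_subset_iff]
    using h

theorem DimLeOneOn.of_preimage {g : X → Z} (hg : Surjective g) {𝒞 : Set (Set Z)}
    (h : DimLeOneOn ((g ⁻¹' ·) '' 𝒞)) : DimLeOneOn 𝒞 := by
  intro A hA B hB C hC hABC
  obtain ⟨_, ⟨Y₀, hY₀, rfl⟩, _, ⟨Y₁, hY₁, rfl⟩, _, ⟨Y₂, hY₂, rfl⟩, hcov⟩ :=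
    h _ (mem_image_of_mem _ hA) _ (mem_image_of_mem _ hB) _ (mem_image_of_mem _ hC)
      (by rw [← preimage_inter, ← preimage_inter, hABC, preimage_empty])
  exact ⟨Y₀, hY₀, Y₁, hY₁, Y₂, hY₂, hcov.of_preimage hg⟩

variable [TopologicalSpace X] {𝒞 : Set (Set X)}

theorem dimLeOne_iff_dimLeOneOn_isClosed :
    DimLeOne X ↔ DimLeOneOn {C : Set X | IsClosed C} := by
  refine ⟨fun h A hA B hB C hC hABC => ?_, fun h A B C hA hB hC hABC => ?_⟩
  · obtain ⟨Y₀, Y₁, Y₂, h₀, h₁, h₂, hY⟩ := h A B C hA hB hC hABC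
    exact ⟨Y₀, h₀, Y₁, h₁, Y₂, h₂, hY⟩
  · obtain ⟨Y₀, h₀, Y₁, h₁, Y₂, h₂, hY⟩ := h A hA B hB C hC hABC
    exact ⟨Y₀, Y₁, Y₂, h₀, h₁, h₂, hY⟩

theorem IsInterpolating.exists_superset_inter_inter_eq_empty (h𝒞 : IsInterpolating 𝒞)
    {A B C : Set X} (hA : IsClosed A) (hB : IsClosed B) (hC : IsClosed C)
    (h : A ∩ B ∩ C = ∅) :
    ∃ A' ∈ 𝒞, ∃ B' ∈ 𝒞, ∃ C' ∈ 𝒞, A ⊆ A' ∧ B ⊆ B' ∧ C ⊆ C' ∧ A' ∩ B' ∩ C' = ∅ := by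
  obtain ⟨A', hA'𝒞, hAA', hA'⟩ := h𝒞.exists_between hA (hB.inter hC).isOpen_compl
    fun x hxA hxBC => h.subset ⟨⟨hxA, hxBC.1⟩, hxBC.2⟩
  have hA'c := h𝒞.isClosed A' hA'𝒞
  obtain ⟨B', hB'𝒞, hBB', hB'⟩ := h𝒞.exists_between hB (hA'c.inter hC).isOpen_compl
    fun x hxB hxAC => hA' hxAC.1 ⟨hxB, hxAC.2⟩
  obtain ⟨C', hC'𝒞, hCC', hC'⟩ := h𝒞.exists_between hC
    (hA'c.inter (h𝒞.isClosed B' hB'𝒞)).isOpen_compl fun x hxC hxAB => hB' hxAB.2 ⟨hxAB.1, hxC⟩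
  exact ⟨A', hA'𝒞, B', hB'𝒞, C', hC'𝒞, hAA', hBB', hCC',
    eq_empty_of_forall_notMem fun x hx => hC' hx.2 hx.1⟩

theorem IsInterpolating.dimLeOneOn_iff (h𝒞 : IsInterpolating 𝒞) : DimLeOneOn 𝒞 ↔ DimLeOne X := by
  rw [dimLeOne_iff_dimLeOneOn_isClosed]
  constructor
  · intro h A hA B hB C hC hABC
    obtain ⟨A', hA', B', hB', C', hC', hAA', hBB', hCC', h'⟩ :=
      h𝒞.exists_superset_inter_inter_eq_empty hA hB hC hABC
    obtain ⟨Y₀, hY₀, Y₁, hY₁, Y₂, hY₂, hA'Y, hB'Y, hC'Y, hY⟩ := h A' hA' B' hB' C' hC' h'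
    exact ⟨Y₀, h𝒞.isClosed _ hY₀, Y₁, h𝒞.isClosed _ hY₁, Y₂, h𝒞.isClosed _ hY₂,
      hAA'.trans hA'Y, hBB'.trans hB'Y, hCC'.trans hC'Y, hY⟩
  · intro h A hA B hB C hC hABC
    obtain ⟨Y₀, hY₀, Y₁, hY₁, Y₂, hY₂, hAY, hBY, hCY, hY, hcov⟩ :=
      h A (h𝒞.isClosed A hA) B (h𝒞.isClosed B hB) C (h𝒞.isClosed C hC) hABC
    obtain ⟨Y₀', hY₀', Y₁', hY₁', Y₂', hY₂', h₀, h₁, h₂, hY'⟩ :=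
      h𝒞.exists_superset_inter_inter_eq_empty hY₀ hY₁ hY₂ hY
    exact ⟨Y₀', hY₀', Y₁', hY₁', Y₂', hY₂', hAY.trans h₀, hBY.trans h₁, hCY.trans h₂, hY',
      univ_subset_iff.mp (hcov ▸ union_subset_union (union_subset_union h₀ h₁) h₂)⟩

end DimensionOne

section Components

variable {X : Type*} [TopologicalSpace X]

theorem IsPreconnected.subset_left_of_subset_union_of_isClosed {s t t' : Set X}
    (hs : IsPreconnected s) (ht : IsClosed t) (ht' : IsClosed t') (hcov : s ⊆ t ∪ t')
    (hdisj : Disjoint (s ∩ t) t') (hst : (s ∩ t).Nonempty) : s ⊆ t := by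
  intro x hx
  by_contra hxt
  obtain ⟨y, hys, hyt, hyt'⟩ := isPreconnected_closed_iff.mp hs t t' ht ht' hcov hst
    ⟨x, hx, (hcov hx).resolve_left hxt⟩
  exact disjoint_left.mp hdisj ⟨hys, hyt⟩ hyt'

theorem connectedComponentIn_subset_of_isClosed_inter {S O : Set X} {x : X} (hO : IsOpen O)
    (hSO : IsClosed (S ∩ O)) (hx : x ∈ O) : connectedComponentIn S x ⊆ O := by
  by_cases hxS : x ∈ S
  · refine ((isPreconnected_iff_subset_of_disjoint.mp isPreconnected_connectedComponentIn)
      O (S ∩ O)ᶜ hO hSO.isOpen_compl (fun y _ => (em (y ∈ O)).imp_right fun hy h => hy h.2)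
      ?_).resolve_right fun h => h (mem_connectedComponentIn hxS) ⟨hxS, hx⟩
    exact eq_empty_of_forall_notMem fun y ⟨hy, hyO, hy'⟩ =>
      hy' ⟨connectedComponentIn_subset S x hy, hyO⟩
  · simp [connectedComponentIn_eq_empty hxS]

theorem IsClosed.isClosed_connectedComponentIn {K : Set X} (hK : IsClosed K) (x : X) :
    IsClosed (connectedComponentIn K x) := by
  by_cases hxK : x ∈ K
  · refine closure_subset_iff_isClosed.mp
      (isPreconnected_connectedComponentIn.closure.subset_connectedComponentIn
        (subset_closure (mem_connectedComponentIn hxK)) ?_)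
    exact closure_minimal (connectedComponentIn_subset K x) hK
  · simp [connectedComponentIn_eq_empty hxK]

theorem isCompact_connectedComponentIn [CompactSpace X] {K : Set X} (hK : IsClosed K) (x : X) :
    IsCompact (connectedComponentIn K x) :=
  (hK.isClosed_connectedComponentIn x).isCompact

variable [CompactSpace X] [T2Space X]

theorem exists_isClopen_superset_disjoint {A T : Set X} (hA : IsClosed A) (hT : IsClosed T)
    (h : ∀ a ∈ A, Disjoint (connectedComponent a) T) :
    ∃ E, IsClopen E ∧ A ⊆ E ∧ Disjoint E T := by
  have hq := ConnectedComponents.continuous_coe (α := X)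
  obtain ⟨C, hC, hAC, hCT⟩ := exists_clopen_of_closed_subset_open
    (hA.isCompact.image hq).isClosed (hT.isCompact.image hq).isClosed.isOpen_compl
    (by
      rintro _ ⟨a, ha, rfl⟩ ⟨t, ht, hta⟩
      exact disjoint_left.mp (h a ha) (ConnectedComponents.coe_eq_coe'.mp hta) ht)
  exact ⟨_, hC.preimage hq, fun a ha => hAC (mem_image_of_mem _ ha),
    disjoint_left.mpr fun x hxC hxT => hCT hxC (mem_image_of_mem _ hxT)⟩

theorem exists_isOpen_isClosed_inter_disjoint {S A T : Set X} (hS : IsClosed S) (hA : IsClosed A)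
    (hAS : A ⊆ S) (hT : IsClosed T) (h : ∀ a ∈ A, Disjoint (connectedComponentIn S a) T) :
    ∃ O, IsOpen O ∧ IsClosed (S ∩ O) ∧ A ⊆ O ∧ Disjoint (S ∩ O) T := by
  have : CompactSpace S := isCompact_iff_compactSpace.mp hS.isCompact
  have hcomp (a : S) (ha : a.1 ∈ A) : Disjoint (connectedComponent a) ((↑) ⁻¹' T) := by
    rw [← disjoint_image_left, ← connectedComponentIn_eq_image a.2]
    exact h a ha
  obtain ⟨E, hE, hAE, hET⟩ := exists_isClopen_superset_disjoint
    (hA.preimage continuous_subtype_val) (hT.preimage continuous_subtype_val) hcomp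
  obtain ⟨O, hO, rfl⟩ := isOpen_induced_iff.mp hE.isOpen
  have hSO : (↑) '' ((↑) ⁻¹' O : Set S) = S ∩ O := Subtype.image_preimage_coe S O
  refine ⟨O, hO, ?_, fun a ha => hAE (a := ⟨a, hAS ha⟩) ha, ?_⟩
  · rw [← hSO]
    exact hS.isClosedMap_subtype_val _ hE.isClosed
  · rw [← hSO]
    exact disjoint_image_left.mpr hET

theorem isClosed_setOf_connectedComponentIn_inter_nonempty {L B : Set X} (hL : IsClosed L)
    (hB : IsClosed B) : IsClosed {y | (connectedComponentIn L y ∩ B).Nonempty} := by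
  refine isOpen_compl_iff.mp (isOpen_iff_forall_mem_open.mpr fun y hy => ?_)
  by_cases hyL : y ∈ L
  · obtain ⟨O, hO, hLO, hyO, hOB⟩ := exists_isOpen_isClosed_inter_disjoint hL isClosed_singleton
      (singleton_subset_iff.mpr hyL) hB fun _ h => h ▸ disjoint_iff_inter_eq_empty.mpr
        (not_nonempty_iff_eq_empty.mp hy)
    refine ⟨O, fun z hzO hz => ?_, hO, hyO rfl⟩
    obtain ⟨w, hwz, hwB⟩ := hz
    have hwLO : w ∈ L ∩ O := ⟨connectedComponentIn_subset L z hwz,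
      connectedComponentIn_subset_of_isClosed_inter hO hLO hzO hwz⟩
    exact disjoint_left.mp hOB hwLO hwB
  · exact ⟨Lᶜ, fun z hz ⟨w, hwz, _⟩ => hz (connectedComponentIn_nonempty_iff.mp ⟨w, hwz⟩),
      hL.isOpen_compl, hyL⟩


end Components

section Crooked

variable {X Z : Type*}

def IsCrookedCover (A B P Q Y₁ Y₂ Y₃ : Set X) : Prop :=
  Y₁ ∪ Y₂ ∪ Y₃ = Set.univ ∧ A ⊆ Y₁ ∧ B ⊆ Y₃ ∧ Disjoint Y₁ Y₃ ∧ Disjoint (Y₁ ∩ Y₂) Q ∧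
    Disjoint (Y₂ ∩ Y₃) P

def CrookedOn (𝒞 : Set (Set X)) : Prop :=
  ∀ A ∈ 𝒞, ∀ B ∈ 𝒞, ∀ P ∈ 𝒞, ∀ Q ∈ 𝒞, Disjoint A B → Disjoint A P → Disjoint B Q →
    ∃ Y₁ ∈ 𝒞, ∃ Y₂ ∈ 𝒞, ∃ Y₃ ∈ 𝒞, IsCrookedCover A B P Q Y₁ Y₂ Y₃

theorem IsCrookedCover.mono {A B P Q A' B' P' Q' Y₁ Y₂ Y₃ : Set X} (hA : A ⊆ A') (hB : B ⊆ B')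
    (hP : P ⊆ P') (hQ : Q ⊆ Q') (h : IsCrookedCover A' B' P' Q' Y₁ Y₂ Y₃) :
    IsCrookedCover A B P Q Y₁ Y₂ Y₃ :=
  let ⟨hcov, hA', hB', h13, h12, h23⟩ := h
  ⟨hcov, hA.trans hA', hB.trans hB', h13, h12.mono_right hQ, h23.mono_right hP⟩

theorem IsCrookedCover.of_preimage {g : X → Z} (hg : Surjective g) {A B P Q Y₁ Y₂ Y₃ : Set Z}
    (h : IsCrookedCover (g ⁻¹' A) (g ⁻¹' B) (g ⁻¹' P) (g ⁻¹' Q) (g ⁻¹' Y₁) (g ⁻¹' Y₂)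
      (g ⁻¹' Y₃)) :
    IsCrookedCover A B P Q Y₁ Y₂ Y₃ := by
  simpa only [IsCrookedCover, hg.preimage_subset_preimage_iff, ← preimage_inter,
    ← preimage_union, disjoint_preimage_iff hg, preimage_eq_univ_iff, hg.range_eq,
    univ_subset_iff] using h

theorem CrookedOn.of_preimage {g : X → Z} (hg : Surjective g) {𝒞 : Set (Set Z)}
    (h : CrookedOn ((g ⁻¹' ·) '' 𝒞)) : CrookedOn 𝒞 := by
  intro A hA B hB P hP Q hQ hAB hAP hBQ
  obtain ⟨_, ⟨Y₁, hY₁, rfl⟩, _, ⟨Y₂, hY₂, rfl⟩, _, ⟨Y₃, hY₃, rfl⟩, hcov⟩ :=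
    h _ (mem_image_of_mem _ hA) _ (mem_image_of_mem _ hB) _ (mem_image_of_mem _ hP) _
      (mem_image_of_mem _ hQ) (hAB.preimage g) (hAP.preimage g) (hBQ.preimage g)
  exact ⟨Y₁, hY₁, Y₂, hY₂, Y₃, hY₃, hcov.of_preimage hg⟩

variable [TopologicalSpace X] {𝒞 : Set (Set X)}

theorem IsInterpolating.crookedOn_isClosed (h𝒞 : IsInterpolating 𝒞) (h : CrookedOn 𝒞) :
    CrookedOn {C : Set X | IsClosed C} := by
  intro A hA B hB P hP Q hQ hAB hAP hBQ
  obtain ⟨A', hA'𝒞, hAA', hA'⟩ := h𝒞.exists_between hA (hB.union hP).isOpen_compl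
    fun x ha hx => hx.elim (disjoint_left.mp hAB ha) (disjoint_left.mp hAP ha)
  have hA'c := h𝒞.isClosed A' hA'𝒞
  obtain ⟨B', hB'𝒞, hBB', hB'⟩ := h𝒞.exists_between hB (hA'c.union hQ).isOpen_compl
    fun x hb hx => hx.elim (fun ha' => hA' ha' (Or.inl hb)) (disjoint_left.mp hBQ hb)
  obtain ⟨P', hP'𝒞, hPP', hP'⟩ := h𝒞.exists_between hP hA'c.isOpen_compl
    fun x hp ha' => hA' ha' (Or.inr hp)
  obtain ⟨Q', hQ'𝒞, hQQ', hQ'⟩ := h𝒞.exists_between hQ (h𝒞.isClosed B' hB'𝒞).isOpen_compl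
    fun x hq hb' => hB' hb' (Or.inr hq)
  obtain ⟨Y₁, hY₁, Y₂, hY₂, Y₃, hY₃, hY⟩ := h A' hA'𝒞 B' hB'𝒞 P' hP'𝒞 Q' hQ'𝒞
    (disjoint_left.mpr fun x ha' hb' => hB' hb' (Or.inl ha'))
    (disjoint_left.mpr fun x ha' hp' => hP' hp' ha')
    (disjoint_left.mpr fun x hb' hq' => hQ' hq' hb')
  exact ⟨Y₁, h𝒞.isClosed _ hY₁, Y₂, h𝒞.isClosed _ hY₂, Y₃, h𝒞.isClosed _ hY₃,
    hY.mono hAA' hBB' hPP' hQQ'⟩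

theorem IsInterpolating.crookedOn (h𝒞 : IsInterpolating 𝒞)
    (h : CrookedOn {C : Set X | IsClosed C}) : CrookedOn 𝒞 := by
  intro A hA B hB P hP Q hQ hAB hAP hBQ
  have hPc := h𝒞.isClosed P hP
  have hQc := h𝒞.isClosed Q hQ
  obtain ⟨Y₁, hY₁, Y₂, hY₂, Y₃, hY₃, hcov, hAY, hBY, h13, h12, h23⟩ :=
    h A (h𝒞.isClosed A hA) B (h𝒞.isClosed B hB) P hPc Q hQc hAB hAP hBQ
  obtain ⟨Y₁', hY₁'𝒞, h₁, hY₁'⟩ := h𝒞.exists_between hY₁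
    (hY₃.union (hY₂.inter hQc)).isOpen_compl fun x h1 hx => hx.elim
      (disjoint_left.mp h13 h1) fun h2q => disjoint_left.mp h12 ⟨h1, h2q.1⟩ h2q.2
  have hY₁'c := h𝒞.isClosed Y₁' hY₁'𝒞
  obtain ⟨Y₃', hY₃'𝒞, h₃, hY₃'⟩ := h𝒞.exists_between hY₃
    (hY₁'c.union (hY₂.inter hPc)).isOpen_compl fun x h3 hx => hx.elim
      (fun h1 => hY₁' h1 (Or.inl h3)) fun h2p => disjoint_left.mp h23 ⟨h2p.1, h3⟩ h2p.2
  obtain ⟨Y₂', hY₂'𝒞, h₂, hY₂'⟩ := h𝒞.exists_between hY₂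
    ((hY₁'c.inter hQc).union ((h𝒞.isClosed Y₃' hY₃'𝒞).inter hPc)).isOpen_compl
    fun x h2 hx => hx.elim (fun h1q => hY₁' h1q.1 (Or.inr ⟨h2, h1q.2⟩))
      fun h3p => hY₃' h3p.1 (Or.inr ⟨h2, h3p.2⟩)
  exact ⟨Y₁', hY₁'𝒞, Y₂', hY₂'𝒞, Y₃', hY₃'𝒞,
    univ_subset_iff.mp (hcov ▸ union_subset_union (union_subset_union h₁ h₂) h₃),
    hAY.trans h₁, hBY.trans h₃, disjoint_left.mpr fun x h1 h3 => hY₃' h3 (Or.inl h1),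
    disjoint_left.mpr fun x h12 hq => hY₂' h12.2 (Or.inl ⟨h12.1, hq⟩),
    disjoint_left.mpr fun x h23 hp => hY₂' h23.1 (Or.inr ⟨h23.2, hp⟩)⟩

end Crooked

section HereditarilyIndecomposable

variable {X : Type*} [TopologicalSpace X]

theorem inter_inter_closure_compl_subset {S O : Set X} (hO : IsOpen O) :
    S ∩ O ∩ closure (S ∩ O)ᶜ ⊆ closure Sᶜ := by
  rw [compl_inter, closure_union, hO.isClosed_compl.closure_eq]
  rintro x ⟨⟨-, hxO⟩, hx | hx⟩
  · exact hx
  · exact absurd hxO hx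

theorem isCrookedCover_of_isOpen {A B P Q K L E F : Set X} (hE : IsOpen E) (hF : IsOpen F)
    (hAE : A ⊆ K ∩ E) (hBF : B ⊆ L ∩ F) (hEF : Disjoint (K ∩ E) (L ∩ F))
    (hKQ : Disjoint (closure Kᶜ) Q) (hLP : Disjoint (closure Lᶜ) P) :
    IsCrookedCover A B P Q (K ∩ E) (closure (K ∩ E ∪ L ∩ F)ᶜ) (L ∩ F) := by
  refine ⟨eq_univ_of_forall fun x => ?_, hAE, hBF, hEF, hKQ.mono_left ?_, hLP.mono_left ?_⟩
  · by_cases hx : x ∈ K ∩ E ∪ L ∩ F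
    · exact hx.elim (fun h => Or.inl (Or.inl h)) Or.inr
    · exact Or.inl (Or.inr (subset_closure hx))
  · exact (inter_subset_inter_right _ (closure_mono (compl_subset_compl.mpr
      subset_union_left))).trans (inter_inter_closure_compl_subset hE)
  · rw [inter_comm]
    exact (inter_subset_inter_right _ (closure_mono (compl_subset_compl.mpr
      subset_union_right))).trans (inter_inter_closure_compl_subset hF)

theorem HereditarilyIndecomposable.connectedComponentIn_subset_or [CompactSpace X]
    (hX : HereditarilyIndecomposable X) {K L : Set X} (hK : IsClosed K) (hL : IsClosed L)
    {x y : X} (hx : x ∈ K) (hy : y ∈ L)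
    (h : (connectedComponentIn K x ∩ connectedComponentIn L y).Nonempty) :
    connectedComponentIn K x ⊆ connectedComponentIn L y ∨
      connectedComponentIn L y ⊆ connectedComponentIn K x :=
  hX _ _ (isCompact_connectedComponentIn hK x) (isConnected_connectedComponentIn_iff.mpr hx)
    (isCompact_connectedComponentIn hL y) (isConnected_connectedComponentIn_iff.mpr hy) h

theorem HereditarilyIndecomposable.crookedOn [CompactSpace X] [T2Space X]
    (hX : HereditarilyIndecomposable X) : CrookedOn {C : Set X | IsClosed C} := by
  intro A hA B hB P hP Q hQ hAB hAP hBQ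
  obtain ⟨U, hU, hAU, hUc⟩ := normal_exists_closure_subset hA (hB.union hP).isOpen_compl
    fun x ha h => h.elim (disjoint_left.mp hAB ha) (disjoint_left.mp hAP ha)
  obtain ⟨V, hV, hBV, hVc⟩ := normal_exists_closure_subset hB (hA.union hQ).isOpen_compl
    fun x hb h => h.elim (disjoint_right.mp hAB hb) (disjoint_left.mp hBQ hb)
  have hAK : A ⊆ Vᶜ := fun x ha hv => hVc (subset_closure hv) (Or.inl ha)
  have hBL : B ⊆ Uᶜ := fun x hb hu => hUc (subset_closure hu) (Or.inl hb)
  -- `N` is the union of the components of `Uᶜ` meeting `B`. A component of `Vᶜ` through a point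
  -- of `A` misses `N`: by hereditary indecomposability it would contain, or lie in, a component
  -- of `Uᶜ` meeting `B`, putting a point of `A` in `Uᶜ` or a point of `B` in `Vᶜ`.
  set N := {y | (connectedComponentIn Uᶜ y ∩ B).Nonempty}
  have hAN (a : X) (ha : a ∈ A) : Disjoint (connectedComponentIn Vᶜ a) N := by
    refine disjoint_left.mpr fun y hyK ⟨b, hbL, hb⟩ => ?_
    have hyL : y ∈ Uᶜ := connectedComponentIn_nonempty_iff.mp ⟨b, hbL⟩
    rcases hX.connectedComponentIn_subset_or hV.isClosed_compl hU.isClosed_compl (hAK ha) hyL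
      ⟨y, hyK, mem_connectedComponentIn hyL⟩ with h | h
    · exact connectedComponentIn_subset _ _ (h (mem_connectedComponentIn (hAK ha))) (hAU ha)
    · exact connectedComponentIn_subset _ _ (h hbL) (hBV hb)
  obtain ⟨E, hE, hEc, hAE, hEN⟩ := exists_isOpen_isClosed_inter_disjoint hV.isClosed_compl hA hAK
    (isClosed_setOf_connectedComponentIn_inter_nonempty hU.isClosed_compl hB) hAN
  have hBE (b : X) (hb : b ∈ B) : Disjoint (connectedComponentIn Uᶜ b) (Vᶜ ∩ E) := by
    refine hEN.symm.mono_left fun z hz => ?_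
    exact ⟨b, connectedComponentIn_eq hz ▸ mem_connectedComponentIn (hBL hb), hb⟩
  obtain ⟨F, hF, hFc, hBF, hFE⟩ :=
    exists_isOpen_isClosed_inter_disjoint hU.isClosed_compl hB hBL hEc hBE
  refine ⟨Vᶜ ∩ E, hEc, _, isClosed_closure, Uᶜ ∩ F, hFc, isCrookedCover_of_isOpen hE hF
    (subset_inter hAK hAE) (subset_inter hBL hBF) hFE.symm ?_ ?_⟩
  · rw [compl_compl]
    exact (subset_compl_iff_disjoint_right.mp hVc).mono_right subset_union_right
  · rw [compl_compl]
    exact (subset_compl_iff_disjoint_right.mp hUc).mono_right subset_union_right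

theorem CrookedOn.hereditarilyIndecomposable [T2Space X]
    (h : CrookedOn {C : Set X | IsClosed C}) : HereditarilyIndecomposable X := by
  intro K L hK hKc hL hLc hKL
  by_contra! hcon
  obtain ⟨a, haK, haL⟩ := not_subset.mp hcon.1
  obtain ⟨b, hbL, hbK⟩ := not_subset.mp hcon.2
  obtain ⟨Y₁, hY₁, Y₂, hY₂, Y₃, hY₃, hcov, haY, hbY, h13, h12, h23⟩ :=
    h {a} isClosed_singleton {b} isClosed_singleton L hL.isClosed K hK.isClosed
      (disjoint_singleton.mpr fun hab => haL (hab ▸ hbL)) (disjoint_singleton_left.mpr haL)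
      (disjoint_singleton_left.mpr hbK)
  have hKY : K ⊆ Y₁ := hKc.isPreconnected.subset_left_of_subset_union_of_isClosed hY₁
    (hY₂.union hY₃) (fun x _ => by rw [← union_assoc, hcov]; trivial)
    (disjoint_left.mpr fun x hx h => h.elim (fun hx2 => disjoint_left.mp h12 ⟨hx.2, hx2⟩ hx.1)
      (disjoint_left.mp h13 hx.2)) ⟨a, haK, haY rfl⟩
  have hLY : L ⊆ Y₃ := hLc.isPreconnected.subset_left_of_subset_union_of_isClosed hY₃
    (hY₁.union hY₂) (fun x _ => by rw [union_comm, hcov]; trivial)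
    (disjoint_left.mpr fun x hx h => h.elim (disjoint_right.mp h13 hx.2)
      fun hx2 => disjoint_left.mp h23 ⟨hx2, hx.2⟩ hx.1) ⟨b, hbL, hbY rfl⟩
  obtain ⟨c, hcK, hcL⟩ := hKL
  exact disjoint_left.mp h13 (hKY hcK) (hLY hcL)

end HereditarilyIndecomposable

open FirstOrder Language in
theorem exists_superset_closedUnder {α : Type u} (ops : Set ((n : ℕ) × ((Fin n → α) → α)))
    (hops : ops.Countable) {S : Set α} {κ : Cardinal.{u}} (hκ : ℵ₀ ≤ κ) (hS : #S ≤ κ) :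
    ∃ T, S ⊆ T ∧ #T ≤ κ ∧
      ∀ n φ, ⟨n, φ⟩ ∈ ops → ∀ x : Fin n → α, (∀ i, x i ∈ T) → φ x ∈ T := by
  let L : Language := ⟨fun n => {φ : (Fin n → α) → α // ⟨n, φ⟩ ∈ ops}, fun _ => Empty⟩
  let _ : L.Structure α := ⟨fun φ x => φ.1 x, fun r => isEmptyElim r⟩
  have : Countable ((n : ℕ) × L.Functions n) := by
    have := hops.to_subtype
    refine Function.Injective.countable (f := fun o : (n : ℕ) × L.Functions n =>
      (⟨⟨o.1, o.2.1⟩, o.2.2⟩ : ops)) ?_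
    rintro ⟨n, φ, hφ⟩ ⟨m, ψ, hψ⟩ h
    cases h
    rfl
  refine ⟨Substructure.closure L S, Substructure.subset_closure, ?_,
    fun n φ hφ x hx => Substructure.fun_mem _ (⟨φ, hφ⟩ : L.Functions n) x hx⟩
  have := Substructure.lift_card_closure_le (L := L) (s := S)
  simp only [lift_id] at this
  refine this.trans (max_le hκ ?_)
  calc #S + #((n : ℕ) × L.Functions n) ≤ κ + κ := add_le_add hS (mk_le_aleph0.trans hκ)
    _ = κ := add_eq_self hκ

theorem exists_rat_Icc_subset {x : ℝ} {U : Set ℝ} (hU : U ∈ 𝓝 x) :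
    ∃ p q : ℚ, (p : ℝ) < x ∧ x < q ∧ Icc (p : ℝ) q ⊆ U := by
  obtain ⟨l, r, ⟨hlx, hxr⟩, hU⟩ := mem_nhds_iff_exists_Ioo_subset.mp hU
  obtain ⟨p, hlp, hpx⟩ := exists_rat_btwn hlx
  obtain ⟨q, hxq, hqr⟩ := exists_rat_btwn hxr
  exact ⟨p, q, hpx, hxq, (Icc_subset_Ioo hlp hqr).trans hU⟩

section FactorSpace

variable {Y : Type u} [TopologicalSpace Y] (F : Set C(Y, ℝ))

def evalMap (y : Y) (u : F) : ℝ := u.1 y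

abbrev FactorSpace : Type u := range (evalMap F)

def toFactorSpace : C(Y, FactorSpace F) :=
  ⟨rangeFactorization (evalMap F), (continuous_pi fun u => u.1.continuous).rangeFactorization⟩

theorem surjective_toFactorSpace : Surjective (toFactorSpace F) :=
  rangeFactorization_surjective

instance [CompactSpace Y] : CompactSpace (FactorSpace F) :=
  (surjective_toFactorSpace F).compactSpace (toFactorSpace F).continuous

variable {F}

def factorSublevel (u : F) : Set (FactorSpace F) := {z | (z : F → ℝ) u ≤ 0}

theorem preimage_factorSublevel (u : F) : toFactorSpace F ⁻¹' factorSublevel u = sublevel u.1 :=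
  rfl

theorem isClosed_factorSublevel (u : F) : IsClosed (factorSublevel u) :=
  isClosed_Iic.preimage ((continuous_apply u).comp continuous_subtype_val)

variable (F) in
def factorSublevels : Set (Set (FactorSpace F)) := range factorSublevel

theorem preimage_factorSublevels :
    (toFactorSpace F ⁻¹' ·) '' factorSublevels F = sublevel '' F := by
  rw [factorSublevels, ← range_comp, image_eq_range]
  rfl

structure IsRatLattice (F : Set C(Y, ℝ)) : Prop where
  const_mem (q : ℚ) : ContinuousMap.const Y (q : ℝ) ∈ F
  sub_mem : ∀ u ∈ F, ∀ v ∈ F, u - v ∈ F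
  supClosed : SupClosed F
  infClosed : InfClosed F

namespace IsRatLattice

variable (hF : IsRatLattice F)
include hF

theorem empty_mem_factorSublevels : ∅ ∈ factorSublevels F :=
  ⟨⟨_, hF.const_mem 1⟩, (surjective_toFactorSpace F).preimage_injective
    (by ext y; simp [preimage_factorSublevel, sublevel])⟩

theorem univ_mem_factorSublevels : Set.univ ∈ factorSublevels F :=
  ⟨⟨_, hF.const_mem 0⟩, (surjective_toFactorSpace F).preimage_injective
    (by ext y; simp [preimage_factorSublevel, sublevel])⟩

theorem supClosed_factorSublevels : SupClosed (factorSublevels F) := by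
  rintro _ ⟨u, rfl⟩ _ ⟨v, rfl⟩
  exact ⟨⟨_, hF.infClosed u.2 v.2⟩, (surjective_toFactorSpace F).preimage_injective
    (by ext y; simp [preimage_factorSublevel, sublevel])⟩

theorem infClosed_factorSublevels : InfClosed (factorSublevels F) := by
  rintro _ ⟨u, rfl⟩ _ ⟨v, rfl⟩
  exact ⟨⟨_, hF.supClosed u.2 v.2⟩, (surjective_toFactorSpace F).preimage_injective
    (by ext y; simp [preimage_factorSublevel, sublevel])⟩

theorem setOf_mem_Icc_mem_factorSublevels (u : F) (p q : ℚ) :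
    {z : FactorSpace F | (z : F → ℝ) u ∈ Icc (p : ℝ) q} ∈ factorSublevels F := by
  refine ⟨⟨_, hF.supClosed (hF.sub_mem _ (hF.const_mem p) _ u.2)
    (hF.sub_mem _ u.2 _ (hF.const_mem q))⟩, (surjective_toFactorSpace F).preimage_injective ?_⟩
  ext y
  simp only [preimage_factorSublevel, sublevel, mem_preimage, ContinuousMap.sup_apply,
    ContinuousMap.sub_apply, ContinuousMap.const_apply, mem_Iic, sup_le_iff, sub_nonpos]
  exact Iff.rfl

theorem exists_mem_factorSublevels_mem_nhds {z : FactorSpace F} {W : Set (FactorSpace F)}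
    (hW : IsOpen W) (hzW : z ∈ W) : ∃ C ∈ factorSublevels F, C ∈ 𝓝 z ∧ C ⊆ W := by
  obtain ⟨O, hO, rfl⟩ := isOpen_induced_iff.mp hW
  obtain ⟨I, U, hU, hIU⟩ := isOpen_pi_iff.mp hO z.1 hzW
  choose p q hpz hzq hpq using fun i : I =>
    exists_rat_Icc_subset ((hU i i.2).1.mem_nhds (hU i i.2).2)
  refine ⟨Finset.univ.inf fun i : I => {w : FactorSpace F | (w : F → ℝ) i ∈ Icc (p i : ℝ) (q i)},
    Finset.inf_induction hF.univ_mem_factorSublevels hF.infClosed_factorSublevels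
      fun i _ => hF.setOf_mem_Icc_mem_factorSublevels i (p i) (q i), ?_, fun w hw => ?_⟩
  · rw [Finset.inf_set_eq_iInter]
    refine (Finset.iInter_mem_sets _).mpr fun i _ => ?_
    exact ((continuous_apply _).comp continuous_subtype_val).continuousAt.preimage_mem_nhds
      (Icc_mem_nhds (hpz i) (hzq i))
  · rw [Finset.inf_set_eq_iInter, mem_iInter₂] at hw
    exact hIU fun i hi => hpq ⟨i, hi⟩ (hw ⟨i, hi⟩ (Finset.mem_univ _))

theorem isInterpolating [CompactSpace Y] : IsInterpolating (factorSublevels F) :=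
  .of_nhds (by rintro _ ⟨u, rfl⟩; exact isClosed_factorSublevel u) hF.empty_mem_factorSublevels
    hF.supClosed_factorSublevels fun _ _ hW hzW => hF.exists_mem_factorSublevels_mem_nhds hW hzW

theorem weight_factorSpace_le [CompactSpace Y] : weight (FactorSpace F) ≤ #F :=
  (weight_le_mk hF.isInterpolating.isTopologicalBasis_compl).trans
    (mk_image_le.trans mk_range_le)

theorem dimLeOne_factorSpace [CompactSpace Y] (h : DimLeOneOn (sublevel '' F)) :
    DimLeOne (FactorSpace F) :=
  hF.isInterpolating.dimLeOneOn_iff.mp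
    (.of_preimage (surjective_toFactorSpace F) (by rwa [preimage_factorSublevels]))

theorem hereditarilyIndecomposable_factorSpace [CompactSpace Y]
    (h : CrookedOn (sublevel '' F)) : HereditarilyIndecomposable (FactorSpace F) :=
  (hF.isInterpolating.crookedOn_isClosed
    (.of_preimage (surjective_toFactorSpace F)
      (by rwa [preimage_factorSublevels]))).hereditarilyIndecomposable

end IsRatLattice

theorem factorsThrough_toFactorSpace {X : Type*} [TopologicalSpace X] {f : C(Y, X)}
    {Φ : Set C(X, ℝ)} (hΦ : ∀ x x', x ≠ x' → ∃ φ ∈ Φ, φ x ≠ φ x')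
    (hΦF : (fun φ : C(X, ℝ) => φ.comp f) '' Φ ⊆ F) : FactorsThrough f (toFactorSpace F) := by
  intro y y' hyy'
  by_contra hne
  obtain ⟨φ, hφ, hφne⟩ := hΦ _ _ hne
  exact hφne (congrFun (congrArg Subtype.val hyy') ⟨φ.comp f, hΦF (mem_image_of_mem _ hφ)⟩)

end FactorSpace

section Witnesses

variable {Y : Type u} [TopologicalSpace Y]

noncomputable def dimWitness (x : Fin 3 → C(Y, ℝ)) : Fin 3 → C(Y, ℝ) :=
  Classical.epsilon fun w => IsDimOneCover (sublevel (x 0)) (sublevel (x 1)) (sublevel (x 2))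
    (sublevel (w 0)) (sublevel (w 1)) (sublevel (w 2))

noncomputable def crookedWitness (x : Fin 4 → C(Y, ℝ)) : Fin 3 → C(Y, ℝ) :=
  Classical.epsilon fun w => IsCrookedCover (sublevel (x 0)) (sublevel (x 1)) (sublevel (x 2))
    (sublevel (x 3)) (sublevel (w 0)) (sublevel (w 1)) (sublevel (w 2))

variable {F : Set C(Y, ℝ)}

theorem DimLeOneOn.image_sublevel (h : DimLeOneOn (range (sublevel : C(Y, ℝ) → Set Y)))
    (hF : ∀ x : Fin 3 → C(Y, ℝ), (∀ i, x i ∈ F) → ∀ j, dimWitness x j ∈ F) :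
    DimLeOneOn (sublevel '' F) := by
  rintro _ ⟨a, ha, rfl⟩ _ ⟨b, hb, rfl⟩ _ ⟨c, hc, rfl⟩ habc
  obtain ⟨_, ⟨w₀, rfl⟩, _, ⟨w₁, rfl⟩, _, ⟨w₂, rfl⟩, hw⟩ := h _ ⟨a, rfl⟩ _ ⟨b, rfl⟩ _ ⟨c, rfl⟩ habc
  have hx : ∀ i, ![a, b, c] i ∈ F := by simp [Fin.forall_fin_succ, ha, hb, hc]
  exact ⟨_, mem_image_of_mem _ (hF _ hx 0), _, mem_image_of_mem _ (hF _ hx 1), _,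
    mem_image_of_mem _ (hF _ hx 2), Classical.epsilon_spec (p := fun w => IsDimOneCover
      (sublevel a) (sublevel b) (sublevel c) (sublevel (w 0)) (sublevel (w 1)) (sublevel (w 2)))
      ⟨![w₀, w₁, w₂], hw⟩⟩

theorem CrookedOn.image_sublevel (h : CrookedOn (range (sublevel : C(Y, ℝ) → Set Y)))
    (hF : ∀ x : Fin 4 → C(Y, ℝ), (∀ i, x i ∈ F) → ∀ j, crookedWitness x j ∈ F) :
    CrookedOn (sublevel '' F) := by
  rintro _ ⟨a, ha, rfl⟩ _ ⟨b, hb, rfl⟩ _ ⟨p, hp, rfl⟩ _ ⟨q, hq, rfl⟩ hab hap hbq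
  obtain ⟨_, ⟨w₀, rfl⟩, _, ⟨w₁, rfl⟩, _, ⟨w₂, rfl⟩, hw⟩ :=
    h _ ⟨a, rfl⟩ _ ⟨b, rfl⟩ _ ⟨p, rfl⟩ _ ⟨q, rfl⟩ hab hap hbq
  have hx : ∀ i, ![a, b, p, q] i ∈ F := by simp [Fin.forall_fin_succ, ha, hb, hp, hq]
  exact ⟨_, mem_image_of_mem _ (hF _ hx 0), _, mem_image_of_mem _ (hF _ hx 1), _,
    mem_image_of_mem _ (hF _ hx 2), Classical.epsilon_spec (p := fun w => IsCrookedCover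
      (sublevel a) (sublevel b) (sublevel p) (sublevel q) (sublevel (w 0)) (sublevel (w 1))
      (sublevel (w 2))) ⟨![w₀, w₁, w₂], hw⟩⟩

theorem exists_isRatLattice_superset [CompactSpace Y] [T2Space Y] {S : Set C(Y, ℝ)}
    {κ : Cardinal.{u}} (hκ : ℵ₀ ≤ κ) (hS : #S ≤ κ) :
    ∃ F, S ⊆ F ∧ #F ≤ κ ∧ IsRatLattice F ∧ (DimLeOne Y → DimLeOneOn (sublevel '' F)) ∧
      (HereditarilyIndecomposable Y → CrookedOn (sublevel '' F)) := by
  let ops : Set ((n : ℕ) × ((Fin n → C(Y, ℝ)) → C(Y, ℝ))) :=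
    range (fun q : ℚ => ⟨0, fun _ => .const Y (q : ℝ)⟩) ∪
      {⟨2, fun x => x 0 - x 1⟩, ⟨2, fun x => x 0 ⊔ x 1⟩, ⟨2, fun x => x 0 ⊓ x 1⟩} ∪
      range (fun j => ⟨3, fun x => dimWitness x j⟩) ∪
      range (fun j => ⟨4, fun x => crookedWitness x j⟩)
  have hops : ops.Countable := by
    simp only [ops, countable_union, countable_insert, countable_singleton, and_true]
    exact ⟨⟨countable_range _, countable_range _⟩, countable_range _⟩
  obtain ⟨F, hSF, hFκ, hF⟩ := exists_superset_closedUnder ops hops hκ hS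
  have hbin {φ : C(Y, ℝ) → C(Y, ℝ) → C(Y, ℝ)} (hφ : ⟨2, fun x => φ (x 0) (x 1)⟩ ∈ ops)
      {u v : C(Y, ℝ)} (hu : u ∈ F) (hv : v ∈ F) : φ u v ∈ F :=
    hF 2 _ hφ ![u, v] (Fin.forall_fin_two.mpr ⟨hu, hv⟩)
  refine ⟨F, hSF, hFκ, ⟨fun q => hF 0 (fun _ => .const Y (q : ℝ)) (by simp [ops]) ![] finZeroElim,
    fun u hu v hv => hbin (by simp [ops]) hu hv, fun u hu v hv => hbin (by simp [ops]) hu hv,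
    fun u hu v hv => hbin (by simp [ops]) hu hv⟩, fun hY => ?_, fun hY => ?_⟩
  · exact isInterpolating_range_sublevel.dimLeOneOn_iff.mpr hY |>.image_sublevel
      fun x hx j => hF 3 (dimWitness · j) (by simp [ops]) x hx
  · exact isInterpolating_range_sublevel.crookedOn hY.crookedOn |>.image_sublevel
      fun x hx j => hF 4 (crookedWitness · j) (by simp [ops]) x hx

end Witnesses

theorem exists_separating_mk_le_weight {X : Type u} [TopologicalSpace X] [CompactSpace X]
    [T2Space X] (hw : ℵ₀ ≤ weight X) :
    ∃ Φ : Set C(X, ℝ), #Φ ≤ weight X ∧ ∀ x x', x ≠ x' → ∃ φ ∈ Φ, φ x ≠ φ x' := by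
  obtain ⟨B, hB, hBw⟩ := exists_isTopologicalBasis_mk_eq_weight X
  have hφ (p : {p : B × B // closure p.1.1 ⊆ p.2.1}) : ∃ φ : C(X, ℝ),
      EqOn φ 0 (closure p.1.1.1) ∧ EqOn φ 1 (p.1.2.1)ᶜ := by
    obtain ⟨φ, h0, h1, -⟩ := exists_continuous_zero_one_of_isClosed isClosed_closure
      (hB.isOpen p.1.2.2).isClosed_compl (disjoint_compl_right_iff_subset.mpr p.2)
    exact ⟨φ, h0, h1⟩
  choose φ hφ0 hφ1 using hφ
  refine ⟨range φ, mk_range_le.trans ?_, fun x x' hxx' => ?_⟩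
  · calc #{p : B × B // closure p.1.1 ⊆ p.2.1} ≤ #(B × B) := mk_subtype_le _
      _ = weight X := by rw [mk_prod, lift_id, hBw, mul_eq_self hw]
  · obtain ⟨V, hV, hxV, hVx'⟩ := hB.exists_subset_of_mem_open (mem_compl_singleton_iff.mpr hxx')
      isOpen_compl_singleton
    obtain ⟨U, hU, hxU, hUV⟩ := hB.exists_closure_subset ((hB.isOpen hV).mem_nhds hxV)
    refine ⟨_, mem_range_self ⟨(⟨U, hU⟩, ⟨V, hV⟩), hUV⟩, ?_⟩
    rw [hφ0 _ (subset_closure hxU), hφ1 _ fun h => hVx' h rfl]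
    exact zero_ne_one

/-- Löwenheim–Skolem type factorization: a continuous surjection between compact
Hausdorff spaces factors through a space of the same weight as the range which
inherits hereditary indecomposability and dimension at most one from the domain. -/
theorem factorization_through_small_weight (Y X : Type u) [TopologicalSpace Y]
    [TopologicalSpace X] [CompactSpace Y] [CompactSpace X] [T2Space Y] [T2Space X]
    (f : Y → X) (hfc : Continuous f) (hfs : Function.Surjective f)
    (hw : Cardinal.aleph0 ≤ weight X) :
    ∃ (Z : Type u) (_ : TopologicalSpace Z), CompactSpace Z ∧ T2Space Z ∧
      ∃ (g : Y → Z) (h : Z → X),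
        Continuous g ∧ Function.Surjective g ∧
        Continuous h ∧ Function.Surjective h ∧
        f = h ∘ g ∧ weight Z = weight X ∧
        (HereditarilyIndecomposable Y → HereditarilyIndecomposable Z) ∧
        (DimLeOne Y → DimLeOne Z) := by
  obtain ⟨Φ, hΦw, hΦ⟩ := exists_separating_mk_le_weight hw
  let f' : C(Y, X) := ⟨f, hfc⟩
  obtain ⟨F, hΦF, hFw, hF, hdim, hhi⟩ := exists_isRatLattice_superset
    (S := (fun φ : C(X, ℝ) => φ.comp f') '' Φ) hw (mk_image_le.trans hΦw)
  let g := toFactorSpace F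
  have hgq : IsQuotientMap g :=
    g.continuous.isClosedMap.isQuotientMap g.continuous (surjective_toFactorSpace F)
  have hfg := factorsThrough_toFactorSpace hΦ hΦF
  let h := hgq.lift f' hfg
  have hfh : f = h ∘ g := congrArg DFunLike.coe (hgq.lift_comp f' hfg).symm
  have hhs : Surjective h := (hfh ▸ hfs).of_comp
  have hZ : ℵ₀ ≤ weight (FactorSpace F) :=
    aleph0_le_weight_iff.mpr (have := aleph0_le_weight_iff.mp hw; .of_surjective h hhs)
  refine ⟨FactorSpace F, inferInstance, inferInstance, inferInstance, g, h,
    g.continuous, surjective_toFactorSpace F, h.continuous, hhs, hfh,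
    le_antisymm (hF.weight_factorSpace_le.trans hFw) ?_,
    fun hY => hF.hereditarilyIndecomposable_factorSpace (hhi hY),
    fun hY => hF.dimLeOne_factorSpace (hdim hY)⟩
  exact (weight_le_of_surjective h.continuous hhs).trans (max_eq_right hZ).le
end
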